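/- arXiv:math/0210143 — 6 statements merged into one kernel-verified Lean document; each statement's English description precedes it below -/
import Mathlib

section
/- For every μ ∈ V and every symmetric endomorphism A of ℝⁿ, the derivative at t = 0 of the function t ↦ ‖exp(tA).μ‖² equals tr(M_μ A), where M_μ := −4 Σᵢ (ad_μ Xᵢ)ᵗ ∘ (ad_μ Xᵢ) + 2 Σᵢ (ad_μ Xᵢ) ∘ (ad_μ Xᵢ)ᵗ, ad_μ X (Y) := μ(X,Y), and (·)ᵗ denotes the transpose with respect to ⟨·,·⟩. (Thus the moment map for the GL(n,ℝ)-action on V is m(μ) = M_μ.) -/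
open scoped BigOperators
open Matrix

noncomputable section

/-- vectors in `ℝ^m`. -/
abbrev Vec (m : ℕ) := Fin m → ℝ

/-- bilinear-map candidates `ℝ^m × ℝ^m → ℝ^m`. -/
abbrev Bil (m : ℕ) := Vec m → Vec m → Vec m

/-- the `i`-th standard basis vector of `ℝ^m`. -/
def bvec (m : ℕ) (i : Fin m) : Vec m := Pi.single i 1

/-- `μ` is a skew-symmetric bilinear map, i.e. an element of `V = Λ²(ℝ^m)* ⊗ ℝ^m`. -/
def IsSkewBil {m : ℕ} (μ : Bil m) : Prop :=
  (∀ Y, IsLinearMap ℝ fun X => μ X Y) ∧ (∀ X, IsLinearMap ℝ (μ X)) ∧ ∀ X Y, μ X Y = -μ Y X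

/-- the Jacobi identity for `μ`. -/
def IsJacobi {m : ℕ} (μ : Bil m) : Prop :=
  ∀ X Y Z, μ (μ X Y) Z + μ (μ Y Z) X + μ (μ Z X) Y = 0

/-- iterated left multiplications `μ(X (k-1), ⋯ μ(X 0, Y))`. -/
def adPow {m : ℕ} (μ : Bil m) (X : ℕ → Vec m) : ℕ → Vec m → Vec m
  | 0, Y => Y
  | k + 1, Y => μ (X k) (adPow μ X k Y)

/-- nilpotency of the bracket `μ`. -/
def IsNilpotentBil {m : ℕ} (μ : Bil m) : Prop :=
  ∃ k : ℕ, ∀ (X : ℕ → Vec m) (Y : Vec m), adPow μ X k Y = 0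

/-- membership in the variety `N` of nilpotent Lie brackets on `ℝ^m`. -/
def NilBracket {m : ℕ} (μ : Bil m) : Prop :=
  IsSkewBil μ ∧ IsJacobi μ ∧ IsNilpotentBil μ

/-- the `GL_m(ℝ)` action `(g.μ)(X,Y) = g μ(g⁻¹X, g⁻¹Y)` on `V`. -/
def mact {m : ℕ} (g : Matrix (Fin m) (Fin m) ℝ) (μ : Bil m) : Bil m :=
  fun X Y => g.mulVec (μ (g⁻¹.mulVec X) (g⁻¹.mulVec Y))

/-- `‖μ‖²` for the natural inner product on `V`. -/
def normSqV {m : ℕ} (μ : Bil m) : ℝ :=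
  ∑ i, ∑ j, ∑ k, (μ (bvec m i) (bvec m j) k) ^ 2

/-- the Ricci operator of `(N_μ, ⟨·,·⟩)`, as a matrix:
`⟨Ric_μ X, Y⟩ = -(1/2) Σ ⟨μ(X,Xᵢ),Xⱼ⟩⟨μ(Y,Xᵢ),Xⱼ⟩ + (1/4) Σ ⟨μ(Xᵢ,Xⱼ),X⟩⟨μ(Xᵢ,Xⱼ),Y⟩`. -/
def RicM {m : ℕ} (μ : Bil m) : Matrix (Fin m) (Fin m) ℝ :=
  Matrix.of fun x y =>
    -(1/2) * (∑ i, ∑ j, μ (bvec m x) (bvec m i) j * μ (bvec m y) (bvec m i) j)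
    + (1/4) * (∑ i, ∑ j, μ (bvec m i) (bvec m j) x * μ (bvec m i) (bvec m j) y)

/-- `D` is a derivation of the bracket `μ`. -/
def IsDerivation {m : ℕ} (μ : Bil m) (D : Matrix (Fin m) (Fin m) ℝ) : Prop :=
  ∀ X Y, D.mulVec (μ X Y) = μ (D.mulVec X) Y + μ X (D.mulVec Y)

/-- the matrix of `ad_μ X : Y ↦ μ(X,Y)`. -/
def adMat {m : ℕ} (μ : Bil m) (X : Vec m) : Matrix (Fin m) (Fin m) ℝ :=
  Matrix.of fun j i => μ X (bvec m i) j

/-- the moment-map value `M_μ = -4 Σᵢ (ad_μ Xᵢ)ᵗ(ad_μ Xᵢ) + 2 Σᵢ (ad_μ Xᵢ)(ad_μ Xᵢ)ᵗ`. -/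
def Mmat {m : ℕ} (μ : Bil m) : Matrix (Fin m) (Fin m) ℝ :=
  (-4 : ℝ) • (∑ i, (adMat μ (bvec m i))ᵀ * adMat μ (bvec m i))
    + (2 : ℝ) • (∑ i, adMat μ (bvec m i) * (adMat μ (bvec m i))ᵀ)

/-- the 2-form `ω(X,Y) = ⟨X, JY⟩`. -/
def sympForm {m : ℕ} (J : Matrix (Fin m) (Fin m) ℝ) (X Y : Vec m) : ℝ :=
  X ⬝ᵥ J.mulVec Y

/-- closedness of a 2-form `ω` with respect to the bracket `μ`:
`ω(μ(X,Y),Z) + ω(μ(Y,Z),X) + ω(μ(Z,X),Y) = 0`. -/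
def IsClosedForm {m : ℕ} (ω : Vec m → Vec m → ℝ) (μ : Bil m) : Prop :=
  ∀ X Y Z, ω (μ X Y) Z + ω (μ Y Z) X + ω (μ Z X) Y = 0

/-- membership in `Sp(n,ℝ)`: invertible and preserving `ω = ⟨·, J·⟩`. -/
def IsSymplMat {m : ℕ} (J g : Matrix (Fin m) (Fin m) ℝ) : Prop :=
  IsUnit g ∧ ∀ X Y, sympForm J (g.mulVec X) (g.mulVec Y) = sympForm J X Y

/-- membership in `GL(n,ℂ) = {g : gJ = Jg}`. -/
def IsCxMat {m : ℕ} (J g : Matrix (Fin m) (Fin m) ℝ) : Prop :=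
  IsUnit g ∧ g * J = J * g

/-- the anti-complexified Ricci operator `Ric^{ac} = (1/2)(Ric + J Ric J)`. -/
def Ricac {m : ℕ} (J : Matrix (Fin m) (Fin m) ℝ) (μ : Bil m) : Matrix (Fin m) (Fin m) ℝ :=
  (1/2 : ℝ) • (RicM μ + J * RicM μ * J)

/-- the complexified Ricci operator `Ric^{c} = (1/2)(Ric − J Ric J)`. -/
def Ricc {m : ℕ} (J : Matrix (Fin m) (Fin m) ℝ) (μ : Bil m) : Matrix (Fin m) (Fin m) ℝ :=
  (1/2 : ℝ) • (RicM μ - J * RicM μ * J)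


attribute [local instance] Matrix.linftyOpNormedRing Matrix.linftyOpNormedAlgebra

/-- quadruple index type for sums over four indices. -/
abbrev Q4 (n : ℕ) := Fin n × Fin n × Fin n × Fin n

lemma sum4 {n : ℕ} (f : Q4 n → ℝ) :
    (∑ z : Q4 n, f z) = ∑ i, ∑ j, ∑ k, ∑ l, f (i, j, k, l) := by
  simp [Fintype.sum_prod_type]

lemma bil_apply {n : ℕ} {μ : Bil n} (hμ : IsSkewBil μ) (x y : Vec n) (k : Fin n) :
    μ x y k = ∑ p, ∑ q, x p * y q * μ (bvec n p) (bvec n q) k := by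
  have hx : x = ∑ p, x p • bvec n p := by
    funext j
    simp [bvec, Finset.sum_apply, Pi.single_apply]
  have h1 : μ x y = ∑ p, x p • μ (bvec n p) y := by
    calc μ x y = (IsLinearMap.mk' (fun x => μ x y) (hμ.1 y)) (∑ p, x p • bvec n p) := by
          rw [← hx]; rfl
    _ = ∑ p, x p • μ (bvec n p) y := by
          rw [map_sum]; simp
  have h2 : ∀ p, μ (bvec n p) y = ∑ q, y q • μ (bvec n p) (bvec n q) := by
    intro p
    have hy : y = ∑ q, y q • bvec n q := by
      funext j
      simp [bvec, Finset.sum_apply, Pi.single_apply]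
    calc μ (bvec n p) y = (IsLinearMap.mk' (μ (bvec n p)) (hμ.2.1 _)) (∑ q, y q • bvec n q) := by
          rw [← hy]; rfl
    _ = _ := by rw [map_sum]; simp
  rw [h1]
  simp only [Finset.sum_apply, Pi.smul_apply, smul_eq_mul]
  refine Finset.sum_congr rfl fun p _ => ?_
  rw [h2 p]
  simp only [Finset.sum_apply, Pi.smul_apply, smul_eq_mul, Finset.mul_sum]
  exact Finset.sum_congr rfl fun q _ => by ring

/-- the `(a,b)` entry of a matrix, as a linear map. -/
def entryL (n : ℕ) (a b : Fin n) : Matrix (Fin n) (Fin n) ℝ →ₗ[ℝ] ℝ where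
  toFun M := M a b
  map_add' _ _ := rfl
  map_smul' _ _ := rfl

lemma key_hasDerivAt (n : ℕ) (μ : Bil n) (A : Matrix (Fin n) (Fin n) ℝ)
    (hE : ∀ a b : Fin n, HasDerivAt (fun t : ℝ => NormedSpace.exp (t • A) a b) (A a b) 0)
    (hE' : ∀ a b : Fin n, HasDerivAt (fun t : ℝ => NormedSpace.exp (t • (-A)) a b) (-(A a b)) 0) :
    HasDerivAt (fun t : ℝ => ∑ i, ∑ j, ∑ k,
          (∑ a, (NormedSpace.exp (t • A)) k a *
            (∑ p, ∑ q, (NormedSpace.exp (t • (-A))) p i * (NormedSpace.exp (t • (-A))) q j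
               * μ (bvec n p) (bvec n q) a)) ^ 2)
      (∑ i, ∑ j, ∑ k, 2 * μ (bvec n i) (bvec n j) k *
          ((∑ a, A k a * μ (bvec n i) (bvec n j) a)
            + ((∑ p, -(A p i) * μ (bvec n p) (bvec n j) k)
              + (∑ q, -(A q j) * μ (bvec n i) (bvec n q) k)))) 0 := by
  have hE0 : NormedSpace.exp ((0:ℝ) • A) = (1 : Matrix (Fin n) (Fin n) ℝ) := by simp
  have hE0' : NormedSpace.exp ((0:ℝ) • (-A)) = (1 : Matrix (Fin n) (Fin n) ℝ) := by simp
  have hc : ∀ i j a : Fin n,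
      HasDerivAt (fun t : ℝ => ∑ p, ∑ q, (NormedSpace.exp (t • (-A))) p i
          * (NormedSpace.exp (t • (-A))) q j * μ (bvec n p) (bvec n q) a)
        ((∑ p, -(A p i) * μ (bvec n p) (bvec n j) a)
          + (∑ q, -(A q j) * μ (bvec n i) (bvec n q) a)) 0 := by
    intro i j a
    have h := HasDerivAt.fun_sum (u := Finset.univ) (x := (0:ℝ)) fun p _ =>
      HasDerivAt.fun_sum (u := Finset.univ) fun q _ =>
        ((hE' p i).fun_mul (hE' q j)).mul_const (μ (bvec n p) (bvec n q) a)
    convert h using 1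
    · exact rfl
    · exact rfl
    rw [hE0']
    simp [Matrix.one_apply, ite_mul, mul_ite, add_mul, Finset.sum_add_distrib,
      Finset.sum_ite_eq, Finset.sum_ite_eq']
  have hg : ∀ i j k : Fin n,
      HasDerivAt (fun t : ℝ => ∑ a, (NormedSpace.exp (t • A)) k a *
          (∑ p, ∑ q, (NormedSpace.exp (t • (-A))) p i * (NormedSpace.exp (t • (-A))) q j
             * μ (bvec n p) (bvec n q) a))
        ((∑ a, A k a * μ (bvec n i) (bvec n j) a)
          + ((∑ p, -(A p i) * μ (bvec n p) (bvec n j) k)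
            + (∑ q, -(A q j) * μ (bvec n i) (bvec n q) k))) 0 := by
    intro i j k
    have h := HasDerivAt.fun_sum (u := Finset.univ) (x := (0:ℝ)) fun a _ =>
      (hE k a).fun_mul (hc i j a)
    convert h using 1
    · exact rfl
    · exact rfl
    rw [hE0']
    simp only [Matrix.one_apply, ite_mul, mul_ite, mul_one, mul_zero, one_mul, zero_mul,
      Finset.sum_ite_eq, Finset.sum_ite_eq', Finset.mem_univ, if_true,
      Finset.sum_add_distrib]
    rw [hE0]
    simp [Matrix.one_apply, ite_mul, Finset.sum_ite_eq]
  refine HasDerivAt.fun_sum fun i _ => HasDerivAt.fun_sum fun j _ => HasDerivAt.fun_sum fun k _ => ?_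
  have h := (hg i j k).fun_pow 2
  convert h using 1
  · exact rfl
  rw [hE0, hE0']
  simp only [Matrix.one_apply, ite_mul, mul_ite, mul_one, mul_zero, one_mul, zero_mul,
    Finset.sum_ite_eq, Finset.sum_ite_eq', Finset.mem_univ, if_true]
  ring

lemma final_identity (n : ℕ) (μ : Bil n) (hμ : IsSkewBil μ) (A : Matrix (Fin n) (Fin n) ℝ)
    (hA : Aᵀ = A) :
    (∑ i, ∑ j, ∑ k, 2 * μ (bvec n i) (bvec n j) k *
          ((∑ a, A k a * μ (bvec n i) (bvec n j) a)
            + ((∑ p, -(A p i) * μ (bvec n p) (bvec n j) k)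
              + (∑ q, -(A q j) * μ (bvec n i) (bvec n q) k))))
      = Matrix.trace (Mmat μ * A) := by
  have hAs : ∀ a b, A a b = A b a := fun a b => by conv_lhs => rw [← hA, Matrix.transpose_apply]
  have hsk : ∀ a b c, μ (bvec n a) (bvec n b) c = -(μ (bvec n b) (bvec n a) c) := by
    intro a b c; rw [hμ.2.2]; rfl
  have htrace : Matrix.trace (Mmat μ * A) =
      (-4) * (∑ x, ∑ y, ∑ i, ∑ k, μ (bvec n i) (bvec n x) k * μ (bvec n i) (bvec n y) k * A y x)
      + 2 * (∑ x, ∑ y, ∑ i, ∑ k, μ (bvec n i) (bvec n k) x * μ (bvec n i) (bvec n k) y * A y x) := by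
    simp only [Matrix.trace, Matrix.diag, Matrix.mul_apply, Mmat, Matrix.add_apply,
      Matrix.smul_apply, Matrix.sum_apply, Matrix.transpose_apply, adMat, Matrix.of_apply,
      smul_eq_mul, add_mul, Finset.sum_add_distrib, Finset.mul_sum, Finset.sum_mul]
    rw [← Finset.sum_add_distrib]
    simp only [Finset.sum_add_distrib, mul_assoc]
  have hD : (∑ i, ∑ j, ∑ k, 2 * μ (bvec n i) (bvec n j) k *
          ((∑ a, A k a * μ (bvec n i) (bvec n j) a)
            + ((∑ p, -(A p i) * μ (bvec n p) (bvec n j) k)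
              + (∑ q, -(A q j) * μ (bvec n i) (bvec n q) k))))
      = (∑ z : Q4 n, 2 * (μ (bvec n z.1) (bvec n z.2.1) z.2.2.1 *
            (A z.2.2.1 z.2.2.2 * μ (bvec n z.1) (bvec n z.2.1) z.2.2.2)))
        + ((∑ z : Q4 n, (-2) * (μ (bvec n z.1) (bvec n z.2.1) z.2.2.1 *
            (A z.2.2.2 z.1 * μ (bvec n z.2.2.2) (bvec n z.2.1) z.2.2.1)))
          + (∑ z : Q4 n, (-2) * (μ (bvec n z.1) (bvec n z.2.1) z.2.2.1 *
            (A z.2.2.2 z.2.1 * μ (bvec n z.1) (bvec n z.2.2.2) z.2.2.1)))) := by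
    rw [sum4, sum4, sum4, ← Finset.sum_add_distrib]
    simp only [← Finset.sum_add_distrib]
    refine Finset.sum_congr rfl fun i _ => Finset.sum_congr rfl fun j _ =>
      Finset.sum_congr rfl fun k _ => ?_
    simp only [mul_add, Finset.mul_sum, ← Finset.sum_add_distrib]
    exact Finset.sum_congr rfl fun _ _ => by ring
  rw [hD, htrace]
  rw [← sum4 (fun z : Q4 n => μ (bvec n z.2.2.1) (bvec n z.1) z.2.2.2 * μ (bvec n z.2.2.1) (bvec n z.2.1) z.2.2.2 * A z.2.1 z.1),
      ← sum4 (fun z : Q4 n => μ (bvec n z.2.2.1) (bvec n z.2.2.2) z.1 * μ (bvec n z.2.2.1) (bvec n z.2.2.2) z.2.1 * A z.2.1 z.1),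
      Finset.mul_sum, Finset.mul_sum]
  have e1 : (∑ z : Q4 n, 2 * (μ (bvec n z.1) (bvec n z.2.1) z.2.2.1 *
        (A z.2.2.1 z.2.2.2 * μ (bvec n z.1) (bvec n z.2.1) z.2.2.2)))
      = ∑ z : Q4 n, 2 * (μ (bvec n z.2.2.1) (bvec n z.2.2.2) z.1 *
          μ (bvec n z.2.2.1) (bvec n z.2.2.2) z.2.1 * A z.2.1 z.1) := by
    refine Fintype.sum_equiv ⟨fun z => (z.2.2.1, z.2.2.2, z.1, z.2.1),
      fun z => (z.2.2.1, z.2.2.2, z.1, z.2.1), fun ⟨a,b,c,d⟩ => rfl, fun ⟨a,b,c,d⟩ => rfl⟩ _ _ ?_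
    rintro ⟨i, j, k, a⟩
    simp only [Equiv.coe_fn_mk]
    rw [hAs k a]
    ring
  have hsplit : (∑ z : Q4 n, (-4) * (μ (bvec n z.2.2.1) (bvec n z.1) z.2.2.2 *
        μ (bvec n z.2.2.1) (bvec n z.2.1) z.2.2.2 * A z.2.1 z.1))
      = (∑ z : Q4 n, (-2) * (μ (bvec n z.2.2.1) (bvec n z.1) z.2.2.2 *
          μ (bvec n z.2.2.1) (bvec n z.2.1) z.2.2.2 * A z.2.1 z.1))
        + (∑ z : Q4 n, (-2) * (μ (bvec n z.2.2.1) (bvec n z.1) z.2.2.2 *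
          μ (bvec n z.2.2.1) (bvec n z.2.1) z.2.2.2 * A z.2.1 z.1)) := by
    rw [← Finset.sum_add_distrib]
    exact Finset.sum_congr rfl fun _ _ => by ring
  have e2 : (∑ z : Q4 n, (-2) * (μ (bvec n z.1) (bvec n z.2.1) z.2.2.1 *
        (A z.2.2.2 z.1 * μ (bvec n z.2.2.2) (bvec n z.2.1) z.2.2.1)))
      = ∑ z : Q4 n, (-2) * (μ (bvec n z.2.2.1) (bvec n z.1) z.2.2.2 *
          μ (bvec n z.2.2.1) (bvec n z.2.1) z.2.2.2 * A z.2.1 z.1) := by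
    refine Fintype.sum_equiv ⟨fun z => (z.1, z.2.2.2, z.2.1, z.2.2.1),
      fun z => (z.1, z.2.2.1, z.2.2.2, z.2.1), fun ⟨a,b,c,d⟩ => rfl, fun ⟨a,b,c,d⟩ => rfl⟩ _ _ ?_
    rintro ⟨i, j, k, p⟩
    simp only [Equiv.coe_fn_mk]
    rw [hsk j i, hsk j p]
    ring
  have e3 : (∑ z : Q4 n, (-2) * (μ (bvec n z.1) (bvec n z.2.1) z.2.2.1 *
        (A z.2.2.2 z.2.1 * μ (bvec n z.1) (bvec n z.2.2.2) z.2.2.1)))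
      = ∑ z : Q4 n, (-2) * (μ (bvec n z.2.2.1) (bvec n z.1) z.2.2.2 *
          μ (bvec n z.2.2.1) (bvec n z.2.1) z.2.2.2 * A z.2.1 z.1) := by
    refine Fintype.sum_equiv ⟨fun z => (z.2.1, z.2.2.2, z.1, z.2.2.1),
      fun z => (z.2.2.1, z.1, z.2.2.2, z.2.1), fun ⟨a,b,c,d⟩ => rfl, fun ⟨a,b,c,d⟩ => rfl⟩ _ _ ?_
    rintro ⟨i, j, k, q⟩
    simp only [Equiv.coe_fn_mk]
    rw [hsk i j, hsk i q]
    ring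
  rw [e1, e2, e3, hsplit]
  ring

/-- the derivative at `t = 0` of `t ↦ ‖exp(tA).μ‖²` equals `tr(M_μ A)` for every
`μ ∈ V` and every symmetric endomorphism `A` of `ℝⁿ`. -/
theorem moment_map_gln (n : ℕ) (hn : 1 ≤ n) (μ : Bil n) (hμ : IsSkewBil μ)
    (A : Matrix (Fin n) (Fin n) ℝ) (hA : Aᵀ = A) :
    deriv (fun t : ℝ => normSqV (mact (NormedSpace.exp (t • A)) μ)) 0
      = Matrix.trace (Mmat μ * A) := by
  have hfun : (fun t : ℝ => normSqV (mact (NormedSpace.exp (t • A)) μ))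
      = fun t : ℝ => ∑ i, ∑ j, ∑ k,
          (∑ a, (NormedSpace.exp (t • A)) k a *
            (∑ p, ∑ q, (NormedSpace.exp (t • (-A))) p i * (NormedSpace.exp (t • (-A))) q j
               * μ (bvec n p) (bvec n q) a)) ^ 2 := by
    funext t
    have hinv : (NormedSpace.exp (t • A))⁻¹ = NormedSpace.exp (t • (-A)) := by
      rw [smul_neg]
      exact (Matrix.exp_neg (t • A)).symm
    simp only [normSqV, mact, hinv]
    refine Finset.sum_congr rfl fun i _ => Finset.sum_congr rfl fun j _ =>
      Finset.sum_congr rfl fun k _ => ?_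
    congr 1
    rw [Matrix.mulVec]
    simp only [dotProduct]
    refine Finset.sum_congr rfl fun a _ => ?_
    congr 1
    rw [bil_apply hμ]
    refine Finset.sum_congr rfl fun p _ => Finset.sum_congr rfl fun q _ => ?_
    congr 2
    · simp [Matrix.mulVec, dotProduct, bvec, Pi.single_apply, mul_ite]
    · simp [Matrix.mulVec, dotProduct, bvec, Pi.single_apply, mul_ite]
  have hE : ∀ a b : Fin n,
      HasDerivAt (fun t : ℝ => NormedSpace.exp (t • A) a b) (A a b) 0 := by
    intro a b
    have h : HasDerivAt (fun t : ℝ => NormedSpace.exp (t • A)) A 0 := by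
      have h0 := hasDerivAt_exp_smul_const (𝕂 := ℝ) A 0
      simp only [zero_smul, NormedSpace.exp_zero, one_mul] at h0
      exact h0
    exact ((entryL n a b).toContinuousLinearMap.hasFDerivAt).comp_hasDerivAt 0 h
  have hE' : ∀ a b : Fin n,
      HasDerivAt (fun t : ℝ => NormedSpace.exp (t • (-A)) a b) (-(A a b)) 0 := by
    intro a b
    have h : HasDerivAt (fun t : ℝ => NormedSpace.exp (t • (-A))) (-A) 0 := by
      have h0 := hasDerivAt_exp_smul_const (𝕂 := ℝ) (-A) 0
      simp only [zero_smul, NormedSpace.exp_zero, one_mul] at h0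
      exact h0
    exact ((entryL n a b).toContinuousLinearMap.hasFDerivAt).comp_hasDerivAt 0 h
  rw [hfun, (key_hasDerivAt n μ A hE hE').deriv]
  exact final_identity n μ hμ A hA
end
end

section
/- For every μ ∈ V, the operator M_μ := −4 Σᵢ (ad_μ Xᵢ)ᵗ ∘ (ad_μ Xᵢ) + 2 Σᵢ (ad_μ Xᵢ) ∘ (ad_μ Xᵢ)ᵗ equals 8 Ric_μ; equivalently, ⟨M_μ X, Y⟩ = −4 Σ_{i,j} ⟨μ(X,Xᵢ),Xⱼ⟩⟨μ(Y,Xᵢ),Xⱼ⟩ + 2 Σ_{i,j} ⟨μ(Xᵢ,Xⱼ),X⟩⟨μ(Xᵢ,Xⱼ),Y⟩ = 8⟨Ric_μ X, Y⟩ for all X, Y ∈ ℝⁿ. Consequently, for every symmetric endomorphism A of ℝⁿ, the derivative at t = 0 of t ↦ ‖exp(tA).μ‖² equals 8 tr(Ric_μ A). -/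
open scoped BigOperators
open Matrix

noncomputable section

section AuxMomentMap

variable {n : ℕ} {μ : Bil n}

private lemma skew_apply (hμ : IsSkewBil μ) (X Y : Vec n) (k : Fin n) : μ X Y k = - μ Y X k := by
  rw [hμ.2.2 X Y]; simp

private lemma basis_expansion (u : Vec n) : ∑ p, u p • bvec n p = u := by
  funext j
  simp [bvec, Pi.single_apply]

private lemma expand_left_apply (hμ : IsSkewBil μ) (u v : Vec n) (k : Fin n) :
    μ u v k = ∑ p, u p * μ (bvec n p) v k := by
  conv_lhs => rw [← basis_expansion u]
  have h := hμ.1 v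
  rw [show μ (∑ p, u p • bvec n p) v = ∑ p, u p • μ (bvec n p) v by
    rw [show (μ (∑ p, u p • bvec n p) v) = (IsLinearMap.mk' _ h) (∑ p, u p • bvec n p) from rfl,
      map_sum]
    simp]
  simp [Finset.sum_apply]

private lemma expand_right_apply (hμ : IsSkewBil μ) (u v : Vec n) (k : Fin n) :
    μ u v k = ∑ q, v q * μ u (bvec n q) k := by
  rw [skew_apply hμ, expand_left_apply hμ v u k, ← Finset.sum_neg_distrib]
  exact Finset.sum_congr rfl fun q _ => by rw [skew_apply hμ u (bvec n q) k]; ring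

private lemma expand_bil_apply (hμ : IsSkewBil μ) (u v : Vec n) (k : Fin n) :
    μ u v k = ∑ p, ∑ q, u p * v q * μ (bvec n p) (bvec n q) k := by
  rw [expand_left_apply hμ u v k]
  refine Finset.sum_congr rfl fun p _ => ?_
  rw [expand_right_apply hμ (bvec n p) v k, Finset.mul_sum]
  refine Finset.sum_congr rfl fun q _ => ?_
  ring

private lemma pull_const (a : ℝ) (f : Fin n → Fin n → ℝ) :
    ∑ i, ∑ j, a * f i j = a * ∑ i, ∑ j, f i j := by
  simp [Finset.mul_sum]

private lemma sum_swap4 (F : Fin n → Fin n → Fin n → Fin n → ℝ) :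
    ∑ i, ∑ j, ∑ p, ∑ q, F i j p q = ∑ p, ∑ q, ∑ i, ∑ j, F i j p q := by
  have h1 : ∀ i, ∑ j, ∑ p, ∑ q, F i j p q = ∑ p, ∑ q, ∑ j, F i j p q := by
    intro i
    rw [Finset.sum_comm]
    exact Finset.sum_congr rfl fun p _ => Finset.sum_comm
  calc ∑ i, ∑ j, ∑ p, ∑ q, F i j p q
      = ∑ i, ∑ p, ∑ q, ∑ j, F i j p q := Finset.sum_congr rfl fun i _ => h1 i
    _ = ∑ p, ∑ i, ∑ q, ∑ j, F i j p q := Finset.sum_comm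
    _ = ∑ p, ∑ q, ∑ i, ∑ j, F i j p q := Finset.sum_congr rfl fun p _ => Finset.sum_comm

private lemma sum_swap3 (F : Fin n → Fin n → Fin n → ℝ) :
    ∑ j, ∑ k, ∑ p, F j k p = ∑ p, ∑ j, ∑ k, F j k p := by
  calc ∑ j, ∑ k, ∑ p, F j k p
      = ∑ j, ∑ p, ∑ k, F j k p := Finset.sum_congr rfl fun j _ => Finset.sum_comm
    _ = ∑ p, ∑ j, ∑ k, F j k p := Finset.sum_comm

private lemma key_swap (hμ : IsSkewBil μ) (x y : Fin n) :
    (∑ i, ∑ j, μ (bvec n i) (bvec n x) j * μ (bvec n i) (bvec n y) j)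
      = ∑ i, ∑ j, μ (bvec n x) (bvec n i) j * μ (bvec n y) (bvec n i) j := by
  refine Finset.sum_congr rfl fun i _ => Finset.sum_congr rfl fun j _ => ?_
  rw [skew_apply hμ (bvec n i) (bvec n x), skew_apply hμ (bvec n i) (bvec n y)]
  ring

private lemma part1 (hμ : IsSkewBil μ) : Mmat μ = (8 : ℝ) • RicM μ := by
  ext x y
  simp only [Mmat, RicM, Matrix.add_apply, Matrix.smul_apply, Matrix.sum_apply,
    Matrix.mul_apply, Matrix.transpose_apply, Matrix.of_apply, adMat, smul_eq_mul]
  rw [show (∑ i, ∑ j, μ (bvec n i) (bvec n x) j * μ (bvec n i) (bvec n y) j)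
      = ∑ i, ∑ j, μ (bvec n x) (bvec n i) j * μ (bvec n y) (bvec n i) j from key_swap hμ x y]
  ring

private lemma ric_dot (hμ : IsSkewBil μ) (X Y : Vec n) :
    8 * ((RicM μ).mulVec X ⬝ᵥ Y)
      = -4 * (∑ i, ∑ j, μ X (bvec n i) j * μ Y (bvec n i) j)
        + 2 * (∑ i, ∑ j, (μ (bvec n i) (bvec n j) ⬝ᵥ X) * (μ (bvec n i) (bvec n j) ⬝ᵥ Y)) := by
  have hL : 8 * ((RicM μ).mulVec X ⬝ᵥ Y)
      = ∑ x, ∑ y, (∑ i, ∑ j, (-4) * X y * Y x * (μ (bvec n x) (bvec n i) j * μ (bvec n y) (bvec n i) j)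
          + ∑ i, ∑ j, 2 * X y * Y x * (μ (bvec n i) (bvec n j) x * μ (bvec n i) (bvec n j) y)) := by
    simp only [Matrix.mulVec, dotProduct, RicM, Matrix.of_apply]
    rw [Finset.mul_sum]
    refine Finset.sum_congr rfl fun x _ => ?_
    rw [Finset.sum_mul, Finset.mul_sum]
    refine Finset.sum_congr rfl fun y _ => ?_
    rw [pull_const ((-4) * X y * Y x), pull_const (2 * X y * Y x)]
    ring
  have hA : -4 * (∑ i, ∑ j, μ X (bvec n i) j * μ Y (bvec n i) j)
      = ∑ x, ∑ y, ∑ i, ∑ j, (-4) * X y * Y x * (μ (bvec n x) (bvec n i) j * μ (bvec n y) (bvec n i) j) := by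
    calc -4 * (∑ i, ∑ j, μ X (bvec n i) j * μ Y (bvec n i) j)
        = ∑ i, ∑ j, ∑ p, ∑ q, (-4) * ((X p * μ (bvec n p) (bvec n i) j) * (Y q * μ (bvec n q) (bvec n i) j)) := by
          rw [Finset.mul_sum]
          refine Finset.sum_congr rfl fun i _ => ?_
          rw [Finset.mul_sum]
          refine Finset.sum_congr rfl fun j _ => ?_
          rw [expand_left_apply hμ X (bvec n i) j, expand_left_apply hμ Y (bvec n i) j,
            Finset.sum_mul_sum, Finset.mul_sum]
          refine Finset.sum_congr rfl fun p _ => ?_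
          rw [Finset.mul_sum]
      _ = ∑ p, ∑ q, ∑ i, ∑ j, (-4) * ((X p * μ (bvec n p) (bvec n i) j) * (Y q * μ (bvec n q) (bvec n i) j)) :=
          sum_swap4 _
      _ = ∑ x, ∑ y, ∑ i, ∑ j, (-4) * X y * Y x * (μ (bvec n x) (bvec n i) j * μ (bvec n y) (bvec n i) j) := by
          rw [Finset.sum_comm]
          exact Finset.sum_congr rfl fun x _ => Finset.sum_congr rfl fun y _ =>
            Finset.sum_congr rfl fun i _ => Finset.sum_congr rfl fun j _ => by ring
  have hB : 2 * (∑ i, ∑ j, (μ (bvec n i) (bvec n j) ⬝ᵥ X) * (μ (bvec n i) (bvec n j) ⬝ᵥ Y))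
      = ∑ x, ∑ y, ∑ i, ∑ j, 2 * X y * Y x * (μ (bvec n i) (bvec n j) x * μ (bvec n i) (bvec n j) y) := by
    calc 2 * (∑ i, ∑ j, (μ (bvec n i) (bvec n j) ⬝ᵥ X) * (μ (bvec n i) (bvec n j) ⬝ᵥ Y))
        = ∑ i, ∑ j, ∑ p, ∑ q, 2 * ((μ (bvec n i) (bvec n j) p * X p) * (μ (bvec n i) (bvec n j) q * Y q)) := by
          rw [Finset.mul_sum]
          refine Finset.sum_congr rfl fun i _ => ?_
          rw [Finset.mul_sum]
          refine Finset.sum_congr rfl fun j _ => ?_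
          rw [dotProduct, dotProduct, Finset.sum_mul_sum, Finset.mul_sum]
          refine Finset.sum_congr rfl fun p _ => ?_
          rw [Finset.mul_sum]
      _ = ∑ p, ∑ q, ∑ i, ∑ j, 2 * ((μ (bvec n i) (bvec n j) p * X p) * (μ (bvec n i) (bvec n j) q * Y q)) :=
          sum_swap4 _
      _ = ∑ x, ∑ y, ∑ i, ∑ j, 2 * X y * Y x * (μ (bvec n i) (bvec n j) x * μ (bvec n i) (bvec n j) y) := by
          rw [Finset.sum_comm]
          exact Finset.sum_congr rfl fun x _ => Finset.sum_congr rfl fun y _ =>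
            Finset.sum_congr rfl fun i _ => Finset.sum_congr rfl fun j _ => by ring
  rw [hL, hA, hB, ← Finset.sum_add_distrib]
  exact Finset.sum_congr rfl fun x _ => by rw [← Finset.sum_add_distrib]

private lemma entry_hasDerivAt (A : Matrix (Fin n) (Fin n) ℝ) (k l : Fin n) :
    HasDerivAt (fun t : ℝ => NormedSpace.exp (t • A) k l) (A k l) 0 := by
  letI : SeminormedRing (Matrix (Fin n) (Fin n) ℝ) := Matrix.linftyOpSemiNormedRing
  letI : NormedRing (Matrix (Fin n) (Fin n) ℝ) := Matrix.linftyOpNormedRing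
  letI : NormedAlgebra ℝ (Matrix (Fin n) (Fin n) ℝ) := Matrix.linftyOpNormedAlgebra
  have H : HasDerivAt (fun t : ℝ => NormedSpace.exp (t • A)) A 0 := by
    have := hasDerivAt_exp_smul_const (𝕂 := ℝ) A 0
    rwa [zero_smul, NormedSpace.exp_zero, one_mul] at this
  let lm : Matrix (Fin n) (Fin n) ℝ →ₗ[ℝ] ℝ :=
    { toFun := fun M => M k l
      map_add' := fun M N => rfl
      map_smul' := fun c M => rfl }
  have := (lm.toContinuousLinearMap.hasFDerivAt
    (x := NormedSpace.exp ((0:ℝ) • A))).comp_hasDerivAt 0 H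
  exact this

private lemma exp_inv_eq (A : Matrix (Fin n) (Fin n) ℝ) (t : ℝ) :
    (NormedSpace.exp (t • A))⁻¹ = NormedSpace.exp (t • (-A)) := by
  rw [smul_neg, Matrix.exp_neg]

private lemma mact_exp_apply (hμ : IsSkewBil μ) (A : Matrix (Fin n) (Fin n) ℝ) (t : ℝ)
    (i j k : Fin n) :
    mact (NormedSpace.exp (t • A)) μ (bvec n i) (bvec n j) k
      = ∑ l, NormedSpace.exp (t • A) k l *
          (∑ p, ∑ q, NormedSpace.exp (t • (-A)) p i * NormedSpace.exp (t • (-A)) q j *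
            μ (bvec n p) (bvec n q) l) := by
  rw [mact, exp_inv_eq]
  rw [show ((NormedSpace.exp (t • (-A))).mulVec (bvec n i)) = fun p => NormedSpace.exp (t • (-A)) p i by
    rw [bvec, Matrix.mulVec_single]; simp; rfl]
  rw [show ((NormedSpace.exp (t • (-A))).mulVec (bvec n j)) = fun q => NormedSpace.exp (t • (-A)) q j by
    rw [bvec, Matrix.mulVec_single]; simp; rfl]
  rw [Matrix.mulVec, dotProduct]
  refine Finset.sum_congr rfl fun l _ => ?_
  rw [expand_bil_apply hμ]

private lemma hInner (A : Matrix (Fin n) (Fin n) ℝ) (i j l : Fin n) :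
    HasDerivAt (fun t : ℝ => ∑ p, ∑ q, NormedSpace.exp (t • (-A)) p i *
        NormedSpace.exp (t • (-A)) q j * μ (bvec n p) (bvec n q) l)
      (∑ p, ∑ q, ((-A) p i * NormedSpace.exp ((0:ℝ) • (-A)) q j
          + NormedSpace.exp ((0:ℝ) • (-A)) p i * (-A) q j) * μ (bvec n p) (bvec n q) l) 0 := by
  refine HasDerivAt.fun_sum fun p _ => HasDerivAt.fun_sum fun q _ => ?_
  exact ((entry_hasDerivAt (-A) p i).mul (entry_hasDerivAt (-A) q j)).mul_const _

private lemma hC (A : Matrix (Fin n) (Fin n) ℝ) (i j k : Fin n) :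
    HasDerivAt (fun t : ℝ => ∑ l, NormedSpace.exp (t • A) k l *
        (∑ p, ∑ q, NormedSpace.exp (t • (-A)) p i * NormedSpace.exp (t • (-A)) q j *
          μ (bvec n p) (bvec n q) l))
      (∑ l, (A k l * (∑ p, ∑ q, NormedSpace.exp ((0:ℝ) • (-A)) p i *
            NormedSpace.exp ((0:ℝ) • (-A)) q j * μ (bvec n p) (bvec n q) l)
        + NormedSpace.exp ((0:ℝ) • A) k l *
          (∑ p, ∑ q, ((-A) p i * NormedSpace.exp ((0:ℝ) • (-A)) q j
            + NormedSpace.exp ((0:ℝ) • (-A)) p i * (-A) q j) * μ (bvec n p) (bvec n q) l))) 0 := by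
  exact HasDerivAt.fun_sum fun l _ => (entry_hasDerivAt A k l).mul (hInner A i j l)

private lemma hF (hμ : IsSkewBil μ) (A : Matrix (Fin n) (Fin n) ℝ) :
    HasDerivAt (fun t : ℝ => normSqV (mact (NormedSpace.exp (t • A)) μ))
      (∑ i, ∑ j, ∑ k, ((2:ℕ) * (∑ l, NormedSpace.exp ((0:ℝ) • A) k l *
          (∑ p, ∑ q, NormedSpace.exp ((0:ℝ) • (-A)) p i * NormedSpace.exp ((0:ℝ) • (-A)) q j *
            μ (bvec n p) (bvec n q) l)) ^ (2-1) *
        (∑ l, (A k l * (∑ p, ∑ q, NormedSpace.exp ((0:ℝ) • (-A)) p i *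
              NormedSpace.exp ((0:ℝ) • (-A)) q j * μ (bvec n p) (bvec n q) l)
          + NormedSpace.exp ((0:ℝ) • A) k l *
            (∑ p, ∑ q, ((-A) p i * NormedSpace.exp ((0:ℝ) • (-A)) q j
              + NormedSpace.exp ((0:ℝ) • (-A)) p i * (-A) q j) * μ (bvec n p) (bvec n q) l))))) 0 := by
  have hfun : (fun t : ℝ => normSqV (mact (NormedSpace.exp (t • A)) μ))
      = fun t => ∑ i, ∑ j, ∑ k, (∑ l, NormedSpace.exp (t • A) k l *
          (∑ p, ∑ q, NormedSpace.exp (t • (-A)) p i * NormedSpace.exp (t • (-A)) q j *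
            μ (bvec n p) (bvec n q) l)) ^ 2 := by
    funext t
    rw [normSqV]
    exact Finset.sum_congr rfl fun i _ => Finset.sum_congr rfl fun j _ =>
      Finset.sum_congr rfl fun k _ => by rw [mact_exp_apply hμ A t i j k]
  rw [hfun]
  exact HasDerivAt.fun_sum fun i _ => HasDerivAt.fun_sum fun j _ => HasDerivAt.fun_sum fun k _ =>
    (hC A i j k).pow 2

private lemma collapseD (A : Matrix (Fin n) (Fin n) ℝ) :
    (∑ i, ∑ j, ∑ k, ((2:ℕ) * (∑ l, NormedSpace.exp ((0:ℝ) • A) k l *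
          (∑ p, ∑ q, NormedSpace.exp ((0:ℝ) • (-A)) p i * NormedSpace.exp ((0:ℝ) • (-A)) q j *
            μ (bvec n p) (bvec n q) l)) ^ (2-1) *
        (∑ l, (A k l * (∑ p, ∑ q, NormedSpace.exp ((0:ℝ) • (-A)) p i *
              NormedSpace.exp ((0:ℝ) • (-A)) q j * μ (bvec n p) (bvec n q) l)
          + NormedSpace.exp ((0:ℝ) • A) k l *
            (∑ p, ∑ q, ((-A) p i * NormedSpace.exp ((0:ℝ) • (-A)) q j
              + NormedSpace.exp ((0:ℝ) • (-A)) p i * (-A) q j) * μ (bvec n p) (bvec n q) l)))))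
      = ∑ i, ∑ j, ∑ k, 2 * μ (bvec n i) (bvec n j) k *
          ((∑ l, A k l * μ (bvec n i) (bvec n j) l)
            + ((∑ p, -(A p i) * μ (bvec n p) (bvec n j) k)
              + (∑ q, -(A q j) * μ (bvec n i) (bvec n q) k))) := by
  have h0 : NormedSpace.exp ((0:ℝ) • A) = 1 := by rw [zero_smul, NormedSpace.exp_zero]
  have h0' : NormedSpace.exp ((0:ℝ) • (-A)) = 1 := by rw [zero_smul, NormedSpace.exp_zero]
  simp only [h0, h0']
  refine Finset.sum_congr rfl fun i _ => Finset.sum_congr rfl fun j _ =>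
    Finset.sum_congr rfl fun k _ => ?_
  have c1 : ∀ l, (∑ p, ∑ q, (1 : Matrix (Fin n) (Fin n) ℝ) p i * (1 : Matrix (Fin n) (Fin n) ℝ) q j *
      μ (bvec n p) (bvec n q) l) = μ (bvec n i) (bvec n j) l := by
    intro l
    simp [Matrix.one_apply]
  have c2 : ∀ l, (∑ p, ∑ q, ((-A) p i * (1 : Matrix (Fin n) (Fin n) ℝ) q j
        + (1 : Matrix (Fin n) (Fin n) ℝ) p i * (-A) q j) * μ (bvec n p) (bvec n q) l)
      = (∑ p, -(A p i) * μ (bvec n p) (bvec n j) l) + (∑ q, -(A q j) * μ (bvec n i) (bvec n q) l) := by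
    intro l
    simp [Matrix.one_apply, add_mul, Finset.sum_add_distrib]
  simp only [c1, c2]
  have c3 : (∑ l, (1 : Matrix (Fin n) (Fin n) ℝ) k l * μ (bvec n i) (bvec n j) l)
      = μ (bvec n i) (bvec n j) k := by simp [Matrix.one_apply]
  rw [c3]
  rw [Finset.sum_add_distrib]
  have c4 : (∑ l, (1 : Matrix (Fin n) (Fin n) ℝ) k l *
      ((∑ p, -(A p i) * μ (bvec n p) (bvec n j) l) + (∑ q, -(A q j) * μ (bvec n i) (bvec n q) l)))
      = (∑ p, -(A p i) * μ (bvec n p) (bvec n j) k) + (∑ q, -(A q j) * μ (bvec n i) (bvec n q) k) := by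
    simp [Matrix.one_apply]
  rw [c4]
  push_cast
  ring

private lemma final_alg (hμ : IsSkewBil μ) (A : Matrix (Fin n) (Fin n) ℝ) :
    (∑ i, ∑ j, ∑ k, 2 * μ (bvec n i) (bvec n j) k *
        ((∑ l, A k l * μ (bvec n i) (bvec n j) l)
          + ((∑ p, -(A p i) * μ (bvec n p) (bvec n j) k)
            + (∑ q, -(A q j) * μ (bvec n i) (bvec n q) k))))
      = 8 * Matrix.trace (RicM μ * A) := by
  have hsplit : (∑ i, ∑ j, ∑ k, 2 * μ (bvec n i) (bvec n j) k *
        ((∑ l, A k l * μ (bvec n i) (bvec n j) l)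
          + ((∑ p, -(A p i) * μ (bvec n p) (bvec n j) k)
            + (∑ q, -(A q j) * μ (bvec n i) (bvec n q) k))))
      = (∑ i, ∑ j, ∑ k, ∑ l, 2 * μ (bvec n i) (bvec n j) k * (A k l * μ (bvec n i) (bvec n j) l))
        + ((∑ i, ∑ j, ∑ k, ∑ p, 2 * μ (bvec n i) (bvec n j) k * (-(A p i) * μ (bvec n p) (bvec n j) k))
          + (∑ i, ∑ j, ∑ k, ∑ q, 2 * μ (bvec n i) (bvec n j) k * (-(A q j) * μ (bvec n i) (bvec n q) k))) := by
    simp only [mul_add, Finset.mul_sum, Finset.sum_add_distrib]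
  rw [hsplit]
  have hT1 : (∑ i, ∑ j, ∑ k, ∑ l, 2 * μ (bvec n i) (bvec n j) k * (A k l * μ (bvec n i) (bvec n j) l))
      = ∑ x, ∑ y, ∑ i, ∑ j, (2 * A y x) * (μ (bvec n i) (bvec n j) x * μ (bvec n i) (bvec n j) y) := by
    rw [sum_swap4]
    rw [Finset.sum_comm]
    exact Finset.sum_congr rfl fun x _ => Finset.sum_congr rfl fun y _ =>
      Finset.sum_congr rfl fun i _ => Finset.sum_congr rfl fun j _ => by ring
  have hT2 : (∑ i, ∑ j, ∑ k, ∑ p, 2 * μ (bvec n i) (bvec n j) k * (-(A p i) * μ (bvec n p) (bvec n j) k))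
      = ∑ x, ∑ y, ∑ i, ∑ j, (-2 * A y x) * (μ (bvec n x) (bvec n i) j * μ (bvec n y) (bvec n i) j) := by
    calc (∑ i, ∑ j, ∑ k, ∑ p, 2 * μ (bvec n i) (bvec n j) k * (-(A p i) * μ (bvec n p) (bvec n j) k))
        = ∑ i, ∑ p, ∑ j, ∑ k, 2 * μ (bvec n i) (bvec n j) k * (-(A p i) * μ (bvec n p) (bvec n j) k) :=
          Finset.sum_congr rfl fun i _ => sum_swap3 _
      _ = ∑ x, ∑ y, ∑ i, ∑ j, (-2 * A y x) * (μ (bvec n x) (bvec n i) j * μ (bvec n y) (bvec n i) j) :=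
          Finset.sum_congr rfl fun x _ => Finset.sum_congr rfl fun y _ =>
            Finset.sum_congr rfl fun i _ => Finset.sum_congr rfl fun j _ => by ring
  have hT3 : (∑ i, ∑ j, ∑ k, ∑ q, 2 * μ (bvec n i) (bvec n j) k * (-(A q j) * μ (bvec n i) (bvec n q) k))
      = ∑ x, ∑ y, ∑ i, ∑ j, (-2 * A y x) * (μ (bvec n x) (bvec n i) j * μ (bvec n y) (bvec n i) j) := by
    calc (∑ i, ∑ j, ∑ k, ∑ q, 2 * μ (bvec n i) (bvec n j) k * (-(A q j) * μ (bvec n i) (bvec n q) k))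
        = ∑ j, ∑ i, ∑ k, ∑ q, 2 * μ (bvec n i) (bvec n j) k * (-(A q j) * μ (bvec n i) (bvec n q) k) :=
          Finset.sum_comm
      _ = ∑ j, ∑ i, ∑ q, ∑ k, 2 * μ (bvec n i) (bvec n j) k * (-(A q j) * μ (bvec n i) (bvec n q) k) :=
          Finset.sum_congr rfl fun j _ => Finset.sum_congr rfl fun i _ => Finset.sum_comm
      _ = ∑ j, ∑ q, ∑ i, ∑ k, 2 * μ (bvec n i) (bvec n j) k * (-(A q j) * μ (bvec n i) (bvec n q) k) :=
          Finset.sum_congr rfl fun j _ => Finset.sum_comm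
      _ = ∑ x, ∑ y, ∑ i, ∑ j, (-2 * A y x) * (μ (bvec n x) (bvec n i) j * μ (bvec n y) (bvec n i) j) := by
          refine Finset.sum_congr rfl fun x _ => Finset.sum_congr rfl fun y _ =>
            Finset.sum_congr rfl fun i _ => Finset.sum_congr rfl fun j _ => ?_
          rw [skew_apply hμ (bvec n i) (bvec n x) j, skew_apply hμ (bvec n i) (bvec n y) j]
          ring
  rw [hT1, hT2, hT3]
  have hRHS : 8 * Matrix.trace (RicM μ * A)
      = ∑ x, ∑ y, 8 * (RicM μ x y * A y x) := by
    rw [Matrix.trace]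
    simp only [Matrix.diag, Matrix.mul_apply, Finset.mul_sum]
  rw [hRHS]
  symm
  calc ∑ x, ∑ y, 8 * (RicM μ x y * A y x)
      = ∑ x, ∑ y, ((∑ i, ∑ j, (2 * A y x) * (μ (bvec n i) (bvec n j) x * μ (bvec n i) (bvec n j) y))
          + ((∑ i, ∑ j, (-2 * A y x) * (μ (bvec n x) (bvec n i) j * μ (bvec n y) (bvec n i) j))
            + (∑ i, ∑ j, (-2 * A y x) * (μ (bvec n x) (bvec n i) j * μ (bvec n y) (bvec n i) j)))) := by
        refine Finset.sum_congr rfl fun x _ => Finset.sum_congr rfl fun y _ => ?_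
        rw [pull_const (2 * A y x), pull_const (-2 * A y x)]
        simp only [RicM, Matrix.of_apply]
        ring
    _ = _ := by simp only [Finset.sum_add_distrib]

end AuxMomentMap

/-- `M_μ = 8 Ric_μ`, equivalently `⟨M_μ X, Y⟩` is given by the explicit formula and
equals `8⟨Ric_μ X, Y⟩`; consequently the derivative at `t = 0` of `t ↦ ‖exp(tA).μ‖²` equals
`8 tr(Ric_μ A)` for every symmetric `A`. -/
theorem moment_map_is_ricci (n : ℕ) (hn : 1 ≤ n) (μ : Bil n) (hμ : IsSkewBil μ) :
    Mmat μ = (8 : ℝ) • RicM μ ∧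
    (∀ X Y : Vec n,
      (Mmat μ).mulVec X ⬝ᵥ Y
          = -4 * (∑ i, ∑ j, μ X (bvec n i) j * μ Y (bvec n i) j)
            + 2 * (∑ i, ∑ j, (μ (bvec n i) (bvec n j) ⬝ᵥ X) * (μ (bvec n i) (bvec n j) ⬝ᵥ Y)) ∧
      (Mmat μ).mulVec X ⬝ᵥ Y = 8 * ((RicM μ).mulVec X ⬝ᵥ Y)) ∧
    ∀ A : Matrix (Fin n) (Fin n) ℝ, Aᵀ = A →
      deriv (fun t : ℝ => normSqV (mact (NormedSpace.exp (t • A)) μ)) 0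
        = 8 * Matrix.trace (RicM μ * A) := by
  refine ⟨part1 hμ, fun X Y => ?_, fun A _ => ?_⟩
  · have h2b : (Mmat μ).mulVec X ⬝ᵥ Y = 8 * ((RicM μ).mulVec X ⬝ᵥ Y) := by
      rw [part1 hμ, Matrix.smul_mulVec, smul_dotProduct, smul_eq_mul]
    exact ⟨h2b.trans (ric_dot hμ X Y), h2b⟩
  · rw [HasDerivAt.deriv (hF hμ A), collapseD A, final_alg hμ A]
end
end

section
/- For every μ ∈ V and every symmetric endomorphism A of ℝ²ⁿ satisfying AJ = −JA, the derivative at t = 0 of t ↦ ‖exp(tA).μ‖² equals 8 tr(Ric^{ac}_μ A). (That is, the moment map for the Sp(n,ℝ)-action on V is μ ↦ 8 Ric^{ac}_μ.) -/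
open scoped BigOperators
open Matrix

noncomputable section

/-! ### Auxiliary lemmas for `moment_map_sp` -/

section MomentAux

open Finset

private lemma rot3 {m : ℕ} (g : Fin m → Fin m → Fin m → ℝ) :
    ∑ i, ∑ j, ∑ k, g i j k = ∑ k, ∑ i, ∑ j, g i j k :=
  (Finset.sum_congr rfl fun _ _ => Finset.sum_comm).trans Finset.sum_comm

private lemma rot4 {m : ℕ} (f : Fin m → Fin m → Fin m → Fin m → ℝ) :
    ∑ i, ∑ j, ∑ k, ∑ l, f i j k l = ∑ l, ∑ i, ∑ j, ∑ k, f i j k l :=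
  (Finset.sum_congr rfl fun _ _ => rot3 _).trans Finset.sum_comm

private lemma lin_expand {m : ℕ} {f : Vec m → Vec m} (hf : IsLinearMap ℝ f) (u : Vec m)
    (k : Fin m) : f u k = ∑ a, u a * f (bvec m a) k := by
  have hu : u = ∑ a, u a • bvec m a := by
    funext x
    simp [bvec, Pi.single_apply]
  conv_lhs => rw [hu]
  rw [show f (∑ a, u a • bvec m a) = (IsLinearMap.mk' f hf) (∑ a, u a • bvec m a) from rfl,
    map_sum]
  simp [Finset.sum_apply]

private lemma bil_expand {m : ℕ} {μ : Bil m} (hμ : IsSkewBil μ) (u v : Vec m) (k : Fin m) :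
    μ u v k = ∑ a, ∑ b, u a * (v b * μ (bvec m a) (bvec m b) k) := by
  rw [lin_expand (hμ.1 v) u k]
  refine Finset.sum_congr rfl fun a _ => ?_
  rw [lin_expand (hμ.2.1 (bvec m a)) v k, Finset.mul_sum]

private lemma mact_entry {m : ℕ} {μ : Bil m} (hμ : IsSkewBil μ)
    (g h : Matrix (Fin m) (Fin m) ℝ) (hg : g⁻¹ = h) (i j k : Fin m) :
    mact g μ (bvec m i) (bvec m j) k
      = ∑ l, ∑ a, ∑ b, g k l * (h a i * (h b j * μ (bvec m a) (bvec m b) l)) := by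
  have hmv : ∀ (M : Matrix (Fin m) (Fin m) ℝ) (x : Fin m),
      M.mulVec (bvec m x) = fun a => M a x := by
    intro M x
    funext a
    simp [bvec, Matrix.mulVec_single]
  unfold mact
  rw [hg, hmv, hmv]
  show ∑ l, g k l * μ (fun a => h a i) (fun b => h b j) l = _
  refine Finset.sum_congr rfl fun l _ => ?_
  rw [bil_expand hμ, Finset.mul_sum]
  refine Finset.sum_congr rfl fun a _ => ?_
  rw [Finset.mul_sum]

private lemma exp_entry_hasDerivAt {m : ℕ} (B : Matrix (Fin m) (Fin m) ℝ) (k l : Fin m) :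
    HasDerivAt (fun t : ℝ => NormedSpace.exp (t • B) k l) (B k l) 0 := by
  letI : SeminormedRing (Matrix (Fin m) (Fin m) ℝ) := Matrix.linftyOpSemiNormedRing
  letI : NormedRing (Matrix (Fin m) (Fin m) ℝ) := Matrix.linftyOpNormedRing
  letI : NormedAlgebra ℝ (Matrix (Fin m) (Fin m) ℝ) := Matrix.linftyOpNormedAlgebra
  have hmat : HasDerivAt (fun t : ℝ => NormedSpace.exp (t • B)) B 0 := by
    have h := hasDerivAt_exp_smul_const (𝕂 := ℝ) B 0
    rw [zero_smul, NormedSpace.exp_zero, one_mul] at h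
    exact h
  let L : Matrix (Fin m) (Fin m) ℝ →ₗ[ℝ] ℝ :=
    { toFun := fun M => M k l, map_add' := fun _ _ => rfl, map_smul' := fun _ _ => rfl }
  have hL : Continuous L := L.continuous_of_finiteDimensional
  exact (ContinuousLinearMap.hasFDerivAt
    (⟨L, hL⟩ : Matrix (Fin m) (Fin m) ℝ →L[ℝ] ℝ)).comp_hasDerivAt 0 hmat

end MomentAux

/-- for `μ ∈ V` and a symmetric endomorphism `A` of `ℝ²ⁿ` anti-commuting with `J`,
the derivative at `t = 0` of `t ↦ ‖exp(tA).μ‖²` equals `8 tr(Ric^{ac}_μ A)`; i.e. the moment map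
for the `Sp(n,ℝ)`-action on `V` is `μ ↦ 8 Ric^{ac}_μ`. -/
theorem moment_map_sp (n : ℕ) (hn : 1 ≤ n)
    (J : Matrix (Fin (2 * n)) (Fin (2 * n)) ℝ) (hJskew : Jᵀ = -J) (hJsq : J * J = -1)
    (μ : Bil (2 * n)) (hμ : IsSkewBil μ)
    (A : Matrix (Fin (2 * n)) (Fin (2 * n)) ℝ) (hA : Aᵀ = A) (hAJ : A * J = -(J * A)) :
    deriv (fun t : ℝ => normSqV (mact (NormedSpace.exp (t • A)) μ)) 0
      = 8 * Matrix.trace (Ricac J μ * A) := by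
  classical
  set c : Fin (2*n) → Fin (2*n) → Fin (2*n) → ℝ :=
    fun a b l => μ (bvec (2*n) a) (bvec (2*n) b) l with hc
  have hskew : ∀ p q r, c p q r = -(c q p r) := by
    intro p q r
    show μ (bvec (2*n) p) (bvec (2*n) q) r = -(μ (bvec (2*n) q) (bvec (2*n) p) r)
    rw [hμ.2.2 (bvec (2*n) p) (bvec (2*n) q)]
    simp
  have hinv : ∀ t : ℝ, (NormedSpace.exp (t • A))⁻¹ = NormedSpace.exp (t • (-A)) := by
    intro t
    rw [smul_neg, Matrix.exp_neg]
  have funeq : (fun t : ℝ => normSqV (mact (NormedSpace.exp (t • A)) μ))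
      = fun t : ℝ => ∑ i, ∑ j, ∑ k, (∑ l, ∑ a, ∑ b,
          NormedSpace.exp (t • A) k l * (NormedSpace.exp (t • (-A)) a i *
            (NormedSpace.exp (t • (-A)) b j * c a b l))) ^ 2 := by
    funext t
    unfold normSqV
    refine Finset.sum_congr rfl fun i _ => Finset.sum_congr rfl fun j _ =>
      Finset.sum_congr rfl fun k _ => ?_
    rw [mact_entry hμ _ _ (hinv t)]
  -- the clean derivative of each coordinate function
  have hf0 : ∀ i j k : Fin (2*n), HasDerivAt
      (fun t : ℝ => ∑ l, ∑ a, ∑ b,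
          NormedSpace.exp (t • A) k l * (NormedSpace.exp (t • (-A)) a i *
            (NormedSpace.exp (t • (-A)) b j * c a b l)))
      ((∑ l, A k l * c i j l) - (∑ a, A a i * c a j k) - (∑ b, A b j * c i b k)) 0 := by
    intro i j k
    have h := HasDerivAt.fun_sum (u := Finset.univ) fun l _ =>
      HasDerivAt.fun_sum (u := Finset.univ) fun a _ =>
        HasDerivAt.fun_sum (u := Finset.univ) fun b _ =>
          ((exp_entry_hasDerivAt A k l).mul
            ((exp_entry_hasDerivAt (-A) a i).mul
              ((exp_entry_hasDerivAt (-A) b j).mul_const (c a b l))))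
    refine h.congr_deriv ?_
    simp only [zero_smul, NormedSpace.exp_zero, Matrix.one_apply, Matrix.neg_apply, Pi.mul_apply,
      mul_ite, ite_mul, mul_one, one_mul, mul_zero, zero_mul, add_zero, zero_add,
      sub_zero, zero_sub, Finset.sum_add_distrib, Finset.sum_sub_distrib,
      Finset.sum_ite_eq, Finset.sum_ite_eq', Finset.mem_univ,
      if_true, neg_mul, mul_neg, neg_neg, Finset.sum_neg_distrib, Finset.sum_ite_irrel,
      Finset.sum_const_zero]
    ring
  -- derivative of each square
  have hsq : ∀ i j k : Fin (2*n), HasDerivAt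
      (fun t : ℝ => (∑ l, ∑ a, ∑ b,
          NormedSpace.exp (t • A) k l * (NormedSpace.exp (t • (-A)) a i *
            (NormedSpace.exp (t • (-A)) b j * c a b l))) ^ 2)
      (2 * c i j k * ((∑ l, A k l * c i j l) - (∑ a, A a i * c a j k)
        - (∑ b, A b j * c i b k))) 0 := by
    intro i j k
    have h := (hf0 i j k).pow 2
    refine h.congr_deriv ?_
    simp only [zero_smul, NormedSpace.exp_zero, Matrix.one_apply, mul_ite, ite_mul,
      mul_one, one_mul, mul_zero, zero_mul, Finset.sum_ite_eq, Finset.sum_ite_eq',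
      Finset.mem_univ, if_true, pow_one, Nat.cast_ofNat]
    ring
  have H : HasDerivAt (fun t : ℝ => ∑ i, ∑ j, ∑ k, (∑ l, ∑ a, ∑ b,
          NormedSpace.exp (t • A) k l * (NormedSpace.exp (t • (-A)) a i *
            (NormedSpace.exp (t • (-A)) b j * c a b l))) ^ 2)
      (∑ i, ∑ j, ∑ k, 2 * c i j k * ((∑ l, A k l * c i j l) - (∑ a, A a i * c a j k)
        - (∑ b, A b j * c i b k))) 0 :=
    HasDerivAt.fun_sum fun i _ => HasDerivAt.fun_sum fun j _ => HasDerivAt.fun_sum fun k _ => hsq i j k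
  rw [funeq, H.deriv]
  -- trace identities
  have hkey : J * A * J = A := by
    have h1 : J * A = -(A * J) := by rw [hAJ, neg_neg]
    rw [h1, neg_mul, mul_assoc, hJsq, mul_neg_one, neg_neg]
  have htr : Matrix.trace (Ricac J μ * A) = Matrix.trace (RicM μ * A) := by
    have h2 : Matrix.trace (J * RicM μ * J * A) = Matrix.trace (RicM μ * A) := by
      rw [show J * RicM μ * J * A = J * (RicM μ * (J * A)) by simp only [mul_assoc],
        Matrix.trace_mul_comm, mul_assoc (RicM μ) (J * A) J, hkey]
    rw [Ricac, Matrix.smul_mul, Matrix.trace_smul, Matrix.add_mul, Matrix.trace_add, h2,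
      smul_eq_mul]
    ring
  have htr2 : Matrix.trace (RicM μ * A) = ∑ x, ∑ y, RicM μ x y * A y x := by
    simp [Matrix.trace, Matrix.diag, Matrix.mul_apply]
  have hRic : ∀ x y, RicM μ x y = -(1/2) * (∑ p, ∑ q, c x p q * c y p q)
      + (1/4) * (∑ p, ∑ q, c p q x * c p q y) := fun x y => rfl
  -- the three sum transformations
  have hT1 : (∑ i, ∑ j, ∑ k, c i j k * (∑ l, A k l * c i j l))
      = ∑ x, ∑ y, A x y * (∑ p, ∑ q, c p q x * c p q y) := by
    calc ∑ i, ∑ j, ∑ k, c i j k * (∑ l, A k l * c i j l)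
        = ∑ i, ∑ j, ∑ k, ∑ l, c i j k * (A k l * c i j l) := by
          simp only [Finset.mul_sum]
      _ = ∑ k, ∑ l, ∑ i, ∑ j, c i j k * (A k l * c i j l) := by
          rw [rot4]; rw [rot4]
      _ = ∑ x, ∑ y, A x y * (∑ p, ∑ q, c p q x * c p q y) := by
          refine Finset.sum_congr rfl fun x _ => Finset.sum_congr rfl fun y _ => ?_
          rw [Finset.mul_sum]
          refine Finset.sum_congr rfl fun p _ => ?_
          rw [Finset.mul_sum]
          refine Finset.sum_congr rfl fun q _ => ?_
          ring
  have hT2 : (∑ i, ∑ j, ∑ k, c i j k * (∑ a, A a i * c a j k))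
      = ∑ x, ∑ y, A x y * (∑ p, ∑ q, c x p q * c y p q) := by
    calc ∑ i, ∑ j, ∑ k, c i j k * (∑ a, A a i * c a j k)
        = ∑ i, ∑ j, ∑ k, ∑ a, c i j k * (A a i * c a j k) := by
          simp only [Finset.mul_sum]
      _ = ∑ a, ∑ i, ∑ j, ∑ k, c i j k * (A a i * c a j k) := by rw [rot4]
      _ = ∑ x, ∑ y, A x y * (∑ p, ∑ q, c x p q * c y p q) := by
          refine Finset.sum_congr rfl fun x _ => Finset.sum_congr rfl fun y _ => ?_
          rw [Finset.mul_sum]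
          refine Finset.sum_congr rfl fun p _ => ?_
          rw [Finset.mul_sum]
          refine Finset.sum_congr rfl fun q _ => ?_
          ring
  have hT3 : (∑ i, ∑ j, ∑ k, c i j k * (∑ b, A b j * c i b k))
      = ∑ x, ∑ y, A x y * (∑ p, ∑ q, c x p q * c y p q) := by
    calc ∑ i, ∑ j, ∑ k, c i j k * (∑ b, A b j * c i b k)
        = ∑ i, ∑ j, ∑ k, ∑ b, c i j k * (A b j * c i b k) := by
          simp only [Finset.mul_sum]
      _ = ∑ b, ∑ i, ∑ j, ∑ k, c i j k * (A b j * c i b k) := by rw [rot4]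
      _ = ∑ b, ∑ j, ∑ i, ∑ k, c i j k * (A b j * c i b k) :=
          Finset.sum_congr rfl fun b _ => Finset.sum_comm
      _ = ∑ x, ∑ y, A x y * (∑ p, ∑ q, c x p q * c y p q) := by
          refine Finset.sum_congr rfl fun x _ => Finset.sum_congr rfl fun y _ => ?_
          rw [Finset.mul_sum]
          refine Finset.sum_congr rfl fun p _ => ?_
          rw [Finset.mul_sum]
          refine Finset.sum_congr rfl fun q _ => ?_
          rw [hskew p y q, hskew p x q]
          ring
  calc ∑ i, ∑ j, ∑ k, 2 * c i j k * ((∑ l, A k l * c i j l) - (∑ a, A a i * c a j k)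
        - (∑ b, A b j * c i b k))
      = ∑ i, ∑ j, ∑ k, ((2 * (c i j k * (∑ l, A k l * c i j l))
          - 2 * (c i j k * (∑ a, A a i * c a j k)))
          - 2 * (c i j k * (∑ b, A b j * c i b k))) := by
        refine Finset.sum_congr rfl fun i _ => Finset.sum_congr rfl fun j _ =>
          Finset.sum_congr rfl fun k _ => ?_
        ring
    _ = 2 * (∑ i, ∑ j, ∑ k, c i j k * (∑ l, A k l * c i j l))
        - 2 * (∑ i, ∑ j, ∑ k, c i j k * (∑ a, A a i * c a j k))
        - 2 * (∑ i, ∑ j, ∑ k, c i j k * (∑ b, A b j * c i b k)) := by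
        simp only [Finset.sum_sub_distrib, ← Finset.mul_sum]
    _ = 2 * (∑ x, ∑ y, A x y * (∑ p, ∑ q, c p q x * c p q y))
        - 2 * (∑ x, ∑ y, A x y * (∑ p, ∑ q, c x p q * c y p q))
        - 2 * (∑ x, ∑ y, A x y * (∑ p, ∑ q, c x p q * c y p q)) := by
        rw [hT1, hT2, hT3]
    _ = ∑ x, ∑ y, (2 * (A x y * (∑ p, ∑ q, c p q x * c p q y))
        - 4 * (A x y * (∑ p, ∑ q, c x p q * c y p q))) := by
        simp only [Finset.sum_sub_distrib, ← Finset.mul_sum]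
        ring
    _ = 8 * Matrix.trace (Ricac J μ * A) := by
        have hswap : (∑ x, ∑ y, RicM μ x y * A y x) = ∑ x, ∑ y, RicM μ y x * A x y :=
          Finset.sum_comm
        rw [htr, htr2, hswap, Finset.mul_sum]
        refine Finset.sum_congr rfl fun x _ => ?_
        rw [Finset.mul_sum]
        refine Finset.sum_congr rfl fun y _ => ?_
        rw [hRic y x]
        have e1 : (∑ p, ∑ q, c y p q * c x p q) = ∑ p, ∑ q, c x p q * c y p q :=
          Finset.sum_congr rfl fun p _ => Finset.sum_congr rfl fun q _ => mul_comm _ _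
        have e2 : (∑ p, ∑ q, c p q y * c p q x) = ∑ p, ∑ q, c p q x * c p q y :=
          Finset.sum_congr rfl fun p _ => Finset.sum_congr rfl fun q _ => mul_comm _ _
        rw [e1, e2]
        ring
end
end

section
/- For every nilpotent Lie bracket μ ∈ N and every symmetric derivation D ∈ Der(μ), tr(Ric_μ ∘ D) = 0. -/
open scoped BigOperators
open Matrix

noncomputable section

/-!
Write `⟨·,·⟩` (`innerV`) for the natural inner product on `V`. Unfolding `Ric_μ` in coordinates
gives `tr(Ric_μ D) = -½ ⟨μ(D·,·), μ⟩ + ¼ ⟨Dμ, μ⟩`. Pairing the derivation identity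
`Dμ = μ(D·,·) + μ(·,D·)` with `μ`, and using skew-symmetry to identify the two terms on the right,
gives `⟨Dμ, μ⟩ = 2 ⟨μ(D·,·), μ⟩`.
-/

def innerV {m : ℕ} (μ ν : Bil m) : ℝ :=
  ∑ i, ∑ j, ∑ k, μ (bvec m i) (bvec m j) k * ν (bvec m i) (bvec m j) k

theorem Finset.sum_sum_comm {α β γ δ M : Type*} [AddCommMonoid M] (s : Finset α) (t : Finset β)
    (u : Finset γ) (v : Finset δ) (f : α → β → γ → δ → M) :
    ∑ a ∈ s, ∑ b ∈ t, ∑ c ∈ u, ∑ d ∈ v, f a b c d =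
      ∑ c ∈ u, ∑ d ∈ v, ∑ a ∈ s, ∑ b ∈ t, f a b c d := by
  simp only [← Finset.sum_product' s t, ← Finset.sum_product' u v]
  exact Finset.sum_comm

theorem IsLinearMap.eq_sum_bvec {m : ℕ} {M : Type*} [AddCommMonoid M] [Module ℝ M]
    {f : Vec m → M} (hf : IsLinearMap ℝ f) (X : Vec m) :
    f X = ∑ k, X k • f (bvec m k) := by
  conv_lhs => rw [pi_eq_sum_univ' X]
  exact map_sum (IsLinearMap.mk' f hf) _ _ |>.trans (by simp [bvec])

section

variable {m : ℕ} {μ : Bil m} {D : Matrix (Fin m) (Fin m) ℝ}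

theorem IsDerivation.innerV_eq (hD : IsDerivation μ D) :
    innerV (fun X Y => D *ᵥ μ X Y) μ =
      innerV (fun X Y => μ (D *ᵥ X) Y) μ + innerV (fun X Y => μ X (D *ᵥ Y)) μ := by
  simp only [innerV, hD _ _, Pi.add_apply, add_mul, Finset.sum_add_distrib]

theorem innerV_apply_mulVec_right_eq_left (hskew : ∀ X Y, μ X Y = -μ Y X) :
    innerV (fun X Y => μ X (D *ᵥ Y)) μ = innerV (fun X Y => μ (D *ᵥ X) Y) μ := by
  rw [innerV, Finset.sum_comm]
  refine Finset.sum_congr rfl fun j _ => Finset.sum_congr rfl fun i _ => ?_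
  simp only [hskew (bvec m i), Pi.neg_apply, neg_mul_neg]

theorem innerV_apply_mulVec_left (hlin : ∀ Y, IsLinearMap ℝ fun X => μ X Y) :
    innerV (fun X Y => μ (D *ᵥ X) Y) μ =
      ∑ x, ∑ y, (∑ i, ∑ j, μ (bvec m x) (bvec m i) j * μ (bvec m y) (bvec m i) j) * D y x := by
  have hexpand : ∀ i j, μ (D *ᵥ bvec m i) (bvec m j) = ∑ l, D l i • μ (bvec m l) (bvec m j) := by
    intro i j
    refine ((hlin (bvec m j)).eq_sum_bvec _).trans ?_
    simp only [bvec, mulVec_single_one, col_apply]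
  simp only [innerV, hexpand, Finset.sum_apply, Pi.smul_apply, smul_eq_mul, Finset.sum_mul]
  refine Finset.sum_congr rfl fun i _ => ?_
  rw [Finset.sum_congr rfl fun j _ => Finset.sum_comm, Finset.sum_comm]
  simp only [mul_comm, mul_left_comm]

theorem innerV_mulVec_apply :
    innerV (fun X Y => D *ᵥ μ X Y) μ =
      ∑ x, ∑ y, (∑ i, ∑ j, μ (bvec m i) (bvec m j) x * μ (bvec m i) (bvec m j) y) * D y x := by
  simp only [innerV, mulVec, dotProduct, Finset.sum_mul]
  rw [Finset.sum_sum_comm, Finset.sum_comm]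
  simp only [mul_comm, mul_left_comm]

theorem trace_RicM_mul (hlin : ∀ Y, IsLinearMap ℝ fun X => μ X Y) :
    trace (RicM μ * D) = -(1/2) * innerV (fun X Y => μ (D *ᵥ X) Y) μ
      + (1/4) * innerV (fun X Y => D *ᵥ μ X Y) μ := by
  rw [innerV_apply_mulVec_left hlin, innerV_mulVec_apply]
  simp only [trace, diag, mul_apply, RicM, of_apply, add_mul, mul_assoc, Finset.sum_add_distrib,
    ← Finset.mul_sum]

end

theorem trace_ricci_deriv_general (n : ℕ) (μ : Bil n) (hμ : NilBracket μ)
    (D : Matrix (Fin n) (Fin n) ℝ) (hDder : IsDerivation μ D) :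
    Matrix.trace (RicM μ * D) = 0 := by
  obtain ⟨⟨hlin, -, hskew⟩, -, -⟩ := hμ
  rw [trace_RicM_mul hlin, hDder.innerV_eq, innerV_apply_mulVec_right_eq_left hskew]
  ring

/-- for every nilpotent Lie bracket `μ ∈ N` and every symmetric derivation
`D ∈ Der(μ)`, `tr(Ric_μ ∘ D) = 0`. -/
theorem trace_ricci_deriv (n : ℕ) (hn : 1 ≤ n) (μ : Bil n) (hμ : NilBracket μ)
    (D : Matrix (Fin n) (Fin n) ℝ) (hDsymm : Dᵀ = D) (hDder : IsDerivation μ D) :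
    Matrix.trace (RicM μ * D) = 0 :=
  trace_ricci_deriv_general n μ hμ D hDder
end
end

section
/- Let μ ∈ N_s, i.e. μ is a nilpotent Lie bracket on ℝ²ⁿ for which the symplectic form ω is closed. If Ric_μ commutes with J (equivalently, the Ricci tensor of the compatible metric is hermitian), then μ = 0. In other words, a symplectic nilpotent Lie group admits no compatible left-invariant metric with hermitian Ricci tensor unless it is abelian. -/
open scoped BigOperators
open Matrix

noncomputable section

section AuxLemmas

variable {m : ℕ} {μ : Bil m}

lemma vec_expand (u : Vec m) : u = ∑ x, u x • bvec m x := by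
  funext j
  simp [bvec, Pi.single_apply, Finset.sum_apply]

lemma mu_left_expand (hμ : IsSkewBil μ) (u w : Vec m) :
    μ u w = ∑ x, u x • μ (bvec m x) w := by
  let f : Vec m →ₗ[ℝ] Vec m := IsLinearMap.mk' _ (hμ.1 w)
  have h1 : μ u w = f u := rfl
  have h2 : f u = ∑ x, u x • f (bvec m x) := by
    conv_lhs => rw [vec_expand u]
    rw [map_sum]
    simp
  rw [h1, h2]
  rfl

lemma mu_left_apply (hμ : IsSkewBil μ) (u w : Vec m) (j : Fin m) :
    μ u w j = ∑ x, u x * μ (bvec m x) w j := by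
  rw [mu_left_expand hμ u w]
  simp [Finset.sum_apply]

lemma mu_right_expand (hμ : IsSkewBil μ) (u w : Vec m) :
    μ u w = ∑ x, w x • μ u (bvec m x) := by
  let f : Vec m →ₗ[ℝ] Vec m := IsLinearMap.mk' _ (hμ.2.1 u)
  have h1 : μ u w = f w := rfl
  have h2 : f w = ∑ x, w x • f (bvec m x) := by
    conv_lhs => rw [vec_expand w]
    rw [map_sum]
    simp
  rw [h1, h2]
  rfl

lemma sum_dotProduct' {ι : Type*} (s : Finset ι) (f : ι → Vec m) (v : Vec m) :
    (∑ x ∈ s, f x) ⬝ᵥ v = ∑ x ∈ s, f x ⬝ᵥ v := by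
  simp only [dotProduct, Finset.sum_apply, Finset.sum_mul]
  exact Finset.sum_comm

/-- the quadratic form of the Ricci matrix. -/
lemma quad_form (hμ : IsSkewBil μ) (u : Vec m) :
    u ⬝ᵥ (RicM μ) *ᵥ u
      = -(1/2) * (∑ i, ∑ j, (μ u (bvec m i) j)^2)
        + (1/4) * (∑ i, ∑ j, ((μ (bvec m i) (bvec m j)) ⬝ᵥ u)^2) := by
  have hsq : ∀ (i j : Fin m), (μ u (bvec m i) j)^2
      = ∑ x, ∑ y, u x * u y * (μ (bvec m x) (bvec m i) j * μ (bvec m y) (bvec m i) j) := by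
    intro i j
    rw [sq, mu_left_apply hμ u (bvec m i) j, Finset.sum_mul_sum]
    apply Finset.sum_congr rfl; intro x _; apply Finset.sum_congr rfl; intro y _; ring
  have hdp : ∀ (i j : Fin m), ((μ (bvec m i) (bvec m j)) ⬝ᵥ u)^2
      = ∑ x, ∑ y, u x * u y * (μ (bvec m i) (bvec m j) x * μ (bvec m i) (bvec m j) y) := by
    intro i j
    rw [sq, dotProduct, Finset.sum_mul_sum]
    apply Finset.sum_congr rfl; intro x _; apply Finset.sum_congr rfl; intro y _; ring
  have swap4 : ∀ (g : Fin m → Fin m → Fin m → Fin m → ℝ),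
      (∑ i, ∑ j, ∑ x, ∑ y, g i j x y) = ∑ x, ∑ y, ∑ i, ∑ j, g i j x y := by
    intro g
    calc (∑ i, ∑ j, ∑ x, ∑ y, g i j x y)
        = ∑ i, ∑ x, ∑ j, ∑ y, g i j x y :=
          Finset.sum_congr rfl (fun i _ => Finset.sum_comm)
      _ = ∑ x, ∑ i, ∑ j, ∑ y, g i j x y := Finset.sum_comm
      _ = ∑ x, ∑ i, ∑ y, ∑ j, g i j x y :=
          Finset.sum_congr rfl (fun x _ => Finset.sum_congr rfl (fun i _ => Finset.sum_comm))
      _ = ∑ x, ∑ y, ∑ i, ∑ j, g i j x y :=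
          Finset.sum_congr rfl (fun x _ => Finset.sum_comm)
  simp only [hsq, hdp]
  simp only [dotProduct, mulVec, RicM, Matrix.of_apply]
  simp only [Finset.mul_sum, Finset.sum_mul, neg_mul, mul_neg, add_mul, mul_add,
    Finset.sum_add_distrib, Finset.sum_neg_distrib]
  congr 1
  · rw [neg_inj,
      swap4 (fun i j x y => 1/2 * (u x * u y * (μ (bvec m x) (bvec m i) j * μ (bvec m y) (bvec m i) j)))]
    exact Finset.sum_congr rfl fun x _ => Finset.sum_congr rfl fun y _ =>
      Finset.sum_congr rfl fun i _ => Finset.sum_congr rfl fun j _ => by ring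
  · rw [swap4 (fun i j x y => 1/4 * (u x * u y * (μ (bvec m i) (bvec m j) x * μ (bvec m i) (bvec m j) y)))]
    exact Finset.sum_congr rfl fun x _ => Finset.sum_congr rfl fun y _ =>
      Finset.sum_congr rfl fun i _ => Finset.sum_congr rfl fun j _ => by ring

lemma RicM_symm (μ : Bil m) : (RicM μ)ᵀ = RicM μ := by
  ext x y
  simp only [RicM, Matrix.transpose_apply, Matrix.of_apply]
  congr 1
  · congr 1
    exact Finset.sum_congr rfl fun i _ => Finset.sum_congr rfl fun j _ => mul_comm _ _
  · congr 1
    exact Finset.sum_congr rfl fun i _ => Finset.sum_congr rfl fun j _ => mul_comm _ _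

/-- if `Ric` commutes with `J`, the Ricci quadratic form is `J`-invariant. -/
lemma quad_J_invariant {J : Matrix (Fin m) (Fin m) ℝ} (hJskew : Jᵀ = -J)
    (hJsq : J * J = -1) (hcomm : RicM μ * J = J * RicM μ) (v : Vec m) :
    (J *ᵥ v) ⬝ᵥ (RicM μ) *ᵥ (J *ᵥ v) = v ⬝ᵥ (RicM μ) *ᵥ v := by
  have key : (RicM μ * J)ᵀ * J = RicM μ := by
    rw [Matrix.transpose_mul, RicM_symm μ, hJskew, Matrix.neg_mul, Matrix.neg_mul, ← hcomm,
      mul_assoc, hJsq, mul_neg_one, neg_neg]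
  calc (J *ᵥ v) ⬝ᵥ (RicM μ) *ᵥ (J *ᵥ v)
      = (J *ᵥ v) ⬝ᵥ (RicM μ * J) *ᵥ v := by rw [mulVec_mulVec]
    _ = ((J *ᵥ v) ᵥ* (RicM μ * J)) ⬝ᵥ v := Matrix.dotProduct_mulVec _ _ _
    _ = ((RicM μ * J)ᵀ *ᵥ (J *ᵥ v)) ⬝ᵥ v := by rw [Matrix.mulVec_transpose]
    _ = (((RicM μ * J)ᵀ * J) *ᵥ v) ⬝ᵥ v := by rw [mulVec_mulVec]
    _ = v ⬝ᵥ (((RicM μ * J)ᵀ * J) *ᵥ v) := dotProduct_comm _ _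
    _ = v ⬝ᵥ (RicM μ) *ᵥ v := by rw [key]

lemma adPow_congr {X X' : ℕ → Vec m} {k : ℕ} (h : ∀ j, j < k → X j = X' j) (Y : Vec m) :
    adPow μ X k Y = adPow μ X' k Y := by
  induction k with
  | zero => rfl
  | succ k ih =>
      simp only [adPow]
      rw [h k (Nat.lt_succ_self k), ih (fun j hj => h j (Nat.lt_succ_of_lt hj))]

/-- central vectors are orthogonal to all brackets. -/
lemma central_perp_brackets {J : Matrix (Fin m) (Fin m) ℝ}
    (hJskew : Jᵀ = -J) (hJsq : J * J = -1)
    (hμs : IsSkewBil μ) (hclosed : IsClosedForm (sympForm J) μ)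
    (hcomm : RicM μ * J = J * RicM μ)
    (v : Vec m) (hv : ∀ Z, μ Z v = 0) :
    ∀ A B, μ A B ⬝ᵥ v = 0 := by
  have hv' : ∀ Z, μ v Z = 0 := by
    intro Z
    rw [hμs.2.2 v Z, hv Z, neg_zero]
  -- closedness: brackets are `ω`-orthogonal to `v`
  have hperp : ∀ X Y, μ X Y ⬝ᵥ J *ᵥ v = 0 := by
    intro X Y
    have h := hclosed X Y v
    rw [hv Y, hv' X] at h
    simp only [sympForm, zero_dotProduct] at h
    simpa [sympForm] using h
  -- the Ricci quadratic form at `v` and at `J v`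
  have hq1 : v ⬝ᵥ (RicM μ) *ᵥ v
      = (1/4) * (∑ i, ∑ j, ((μ (bvec m i) (bvec m j)) ⬝ᵥ v)^2) := by
    rw [quad_form hμs v]
    simp [hv']
  have hq2 : (J *ᵥ v) ⬝ᵥ (RicM μ) *ᵥ (J *ᵥ v)
      = -(1/2) * (∑ i, ∑ j, (μ (J *ᵥ v) (bvec m i) j)^2) := by
    rw [quad_form hμs (J *ᵥ v)]
    have : ∀ i j : Fin m, ((μ (bvec m i) (bvec m j)) ⬝ᵥ (J *ᵥ v))^2 = 0 := by
      intro i j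
      rw [hperp (bvec m i) (bvec m j)]
      norm_num
    simp [this]
  -- combine using hermitian symmetry
  have hqq : v ⬝ᵥ (RicM μ) *ᵥ v = (J *ᵥ v) ⬝ᵥ (RicM μ) *ᵥ (J *ᵥ v) :=
    (quad_J_invariant hJskew hJsq hcomm v).symm
  have hle : (1/4) * (∑ i, ∑ j, ((μ (bvec m i) (bvec m j)) ⬝ᵥ v)^2) ≤ 0 := by
    rw [← hq1, hqq, hq2]
    have : (0:ℝ) ≤ ∑ i, ∑ j, (μ (J *ᵥ v) (bvec m i) j)^2 :=
      Finset.sum_nonneg fun i _ => Finset.sum_nonneg fun j _ => sq_nonneg _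
    nlinarith
  have hge : (0:ℝ) ≤ ∑ i, ∑ j, ((μ (bvec m i) (bvec m j)) ⬝ᵥ v)^2 :=
    Finset.sum_nonneg fun i _ => Finset.sum_nonneg fun j _ => sq_nonneg _
  have hzero : ∑ i, ∑ j, ((μ (bvec m i) (bvec m j)) ⬝ᵥ v)^2 = 0 := by linarith
  have hbasis : ∀ i j : Fin m, μ (bvec m i) (bvec m j) ⬝ᵥ v = 0 := by
    intro i j
    have h1 := (Finset.sum_eq_zero_iff_of_nonneg
      (fun i _ => Finset.sum_nonneg fun j _ => sq_nonneg
        ((μ (bvec m i) (bvec m j)) ⬝ᵥ v))).mp hzero i (Finset.mem_univ i)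
    have h2 := (Finset.sum_eq_zero_iff_of_nonneg
      (fun j _ => sq_nonneg ((μ (bvec m i) (bvec m j)) ⬝ᵥ v))).mp h1 j (Finset.mem_univ j)
    exact (pow_eq_zero_iff (two_ne_zero)).mp h2
  -- extend to all vectors by bilinearity
  intro A B
  rw [mu_left_expand hμs A B, sum_dotProduct']
  apply Finset.sum_eq_zero
  intro x _
  rw [smul_dotProduct]
  rw [mu_right_expand hμs (bvec m x) B, sum_dotProduct']
  have : ∀ y ∈ Finset.univ, (B y • μ (bvec m x) (bvec m y)) ⬝ᵥ v = 0 := by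
    intro y _
    rw [smul_dotProduct, hbasis x y, smul_zero]
  rw [Finset.sum_eq_zero this, smul_zero]

end AuxLemmas

/-- a symplectic nilpotent Lie group admits no compatible left-invariant metric with
hermitian Ricci tensor unless it is abelian: if `μ ∈ N_s` and `Ric_μ` commutes with `J` then
`μ = 0`. -/
theorem no_hermitian_ricci (n : ℕ) (hn : 1 ≤ n)
    (J : Matrix (Fin (2 * n)) (Fin (2 * n)) ℝ) (hJskew : Jᵀ = -J) (hJsq : J * J = -1)
    (μ : Bil (2 * n)) (hμ : NilBracket μ) (hclosed : IsClosedForm (sympForm J) μ)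
    (hcomm : RicM μ * J = J * RicM μ) :
    μ = 0 := by
  classical
  obtain ⟨hskew, hjac, hnil⟩ := hμ
  by_contra hne
  -- least `k` with `adPow μ X k Y = 0` for all `X, Y`
  have hex : ∃ k : ℕ, ∀ (X : ℕ → Vec (2*n)) (Y : Vec (2*n)), adPow μ X k Y = 0 := hnil
  set k₀ := Nat.find hex with hk₀def
  have hk₀ : ∀ (X : ℕ → Vec (2*n)) (Y : Vec (2*n)), adPow μ X k₀ Y = 0 := Nat.find_spec hex
  have hm : 0 < 2*n := by omega
  have hk0ne : k₀ ≠ 0 := by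
    intro h
    have := hk₀ (fun _ => 0) (bvec (2*n) ⟨0, hm⟩)
    rw [h] at this
    simp only [adPow] at this
    have h0 := congrFun this ⟨0, hm⟩
    simp [bvec] at h0
  have hk1ne : k₀ ≠ 1 := by
    intro h
    apply hne
    funext A B
    have := hk₀ (fun _ => A) B
    rw [h] at this
    simpa only [adPow, Pi.zero_apply] using this
  have hk2 : 2 ≤ k₀ := by omega
  have hmin : ¬ ∀ (X : ℕ → Vec (2*n)) (Y : Vec (2*n)), adPow μ X (k₀ - 1) Y = 0 :=
    Nat.find_min hex (by omega)
  push_neg at hmin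
  obtain ⟨X, Y, hvne⟩ := hmin
  set v := adPow μ X (k₀ - 1) Y with hvdef
  -- `v` is central
  have hcentral : ∀ Z, μ Z v = 0 := by
    intro Z
    set X' := Function.update X (k₀ - 1) Z with hX'def
    have heq : adPow μ X' (k₀ - 1) Y = v := by
      rw [hvdef]
      refine (adPow_congr (fun j hj => ?_) Y).symm
      have hj' : j ≠ k₀ - 1 := by omega
      rw [hX'def, Function.update_of_ne hj']
    have h := hk₀ X' Y
    have hsucc : k₀ = (k₀ - 1) + 1 := by omega
    rw [hsucc] at h
    simp only [adPow] at h
    rw [heq, hX'def, Function.update_self] at h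
    exact h
  -- `v` is a bracket value
  have hvbr : v = μ (X (k₀ - 2)) (adPow μ X (k₀ - 2) Y) := by
    have h2 : k₀ - 1 = (k₀ - 2) + 1 := by omega
    rw [hvdef, h2]
    rfl
  have hperp := central_perp_brackets hJskew hJsq hskew hclosed hcomm v hcentral
    (X (k₀ - 2)) (adPow μ X (k₀ - 2) Y)
  rw [← hvbr] at hperp
  exact hvne (dotProduct_self_eq_zero.mp hperp)
end
end

section
/- For every μ ∈ N_s and every ε > 0 there exists g ∈ Sp(n,ℝ) such that tr((Ric^{ac}_{g.μ})²) < ε. (Every symplectic nilpotent Lie group admits compatible left-invariant metrics whose anti-complexified Ricci tensor has arbitrarily small norm.) -/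
open scoped BigOperators
open Matrix

noncomputable section

-- ============ auxiliary development ============

abbrev Cst (m : ℕ) := Fin m → Fin m → Fin m → ℝ

def toBil {m : ℕ} (c : Cst m) : Bil m := fun X Y k => ∑ i, ∑ j, X i * Y j * c i j k

def cOf {m : ℕ} (μ : Bil m) : Cst m := fun i j k => μ (bvec m i) (bvec m j) k

def normSqC {m : ℕ} (c : Cst m) : ℝ := ∑ i, ∑ j, ∑ k, (c i j k)^2

def cact {m : ℕ} (g h : Matrix (Fin m) (Fin m) ℝ) (c : Cst m) : Cst m :=
  fun i j k => ∑ p, ∑ q, ∑ r, g k p * h q i * h r j * c q r p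

def RicC {m : ℕ} (c : Cst m) : Matrix (Fin m) (Fin m) ℝ :=
  Matrix.of fun x y =>
    -(1/2) * (∑ i, ∑ j, c x i j * c y i j) + (1/4) * (∑ i, ∑ j, c i j x * c i j y)

def RacC {m : ℕ} (J : Matrix (Fin m) (Fin m) ℝ) (c : Cst m) : Matrix (Fin m) (Fin m) ℝ :=
  (1/2 : ℝ) • (RicC c + J * RicC c * J)

def Dmt {m : ℕ} (J : Matrix (Fin m) (Fin m) ℝ) (c : Cst m) : Matrix (Fin m) (Fin m) ℝ :=
  -(RacC J c)

def EE {m : ℕ} (J : Matrix (Fin m) (Fin m) ℝ) (c : Cst m) (t : ℝ) : Matrix (Fin m) (Fin m) ℝ :=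
  NormedSpace.exp (t • Dmt J c)

def td {m : ℕ} (D : Matrix (Fin m) (Fin m) ℝ) (c : Cst m) : Cst m :=
  fun i j k => (∑ p, D k p * c i j p) - (∑ q, D q i * c q j k) - (∑ r, D r j * c i r k)

def Phi {m : ℕ} (J : Matrix (Fin m) (Fin m) ℝ) (c : Cst m) (t : ℝ) : ℝ :=
  normSqC (cact (EE J c t) (EE J c (-t)) c)

theorem RicM_eq {m : ℕ} (μ : Bil m) : RicM μ = RicC (cOf μ) := rfl

theorem Ricac_eq {m : ℕ} (J : Matrix (Fin m) (Fin m) ℝ) (μ : Bil m) :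
    Ricac J μ = RacC J (cOf μ) := rfl

theorem toBil_bvec {m : ℕ} (c : Cst m) (i j : Fin m) :
    toBil c (bvec m i) (bvec m j) = fun k => c i j k := by
  funext k
  simp [toBil, bvec, Pi.single_apply]

theorem cOf_toBil {m : ℕ} (c : Cst m) : cOf (toBil c) = c := by
  funext i j k; rw [cOf, toBil_bvec]

theorem toBil_cOf {m : ℕ} {μ : Bil m} (hμ : IsSkewBil μ) : toBil (cOf μ) = μ := by
  funext X Y k
  have hX : X = ∑ i, X i • bvec m i := by
    funext a
    simp [bvec, Finset.sum_apply, Pi.single_apply]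
  have hY : Y = ∑ j, Y j • bvec m j := by
    funext a
    simp [bvec, Finset.sum_apply, Pi.single_apply]
  conv_rhs => rw [hX, hY]
  have e1 : ∀ (Y' : Vec m), μ (∑ i, X i • bvec m i) Y' = ∑ i, X i • μ (bvec m i) Y' := by
    intro Y'
    calc μ (∑ i, X i • bvec m i) Y'
        = (IsLinearMap.mk' (fun X => μ X Y') (hμ.1 Y')) (∑ i, X i • bvec m i) := rfl
      _ = ∑ i, (IsLinearMap.mk' (fun X => μ X Y') (hμ.1 Y')) (X i • bvec m i) := by rw [map_sum]
      _ = ∑ i, X i • μ (bvec m i) Y' := by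
          exact Finset.sum_congr rfl fun i _ => by rw [_root_.map_smul]; rfl
  have e2 : ∀ i, μ (bvec m i) (∑ j, Y j • bvec m j) = ∑ j, Y j • μ (bvec m i) (bvec m j) := by
    intro i
    calc μ (bvec m i) (∑ j, Y j • bvec m j)
        = (IsLinearMap.mk' (μ (bvec m i)) (hμ.2.1 (bvec m i))) (∑ j, Y j • bvec m j) := rfl
      _ = ∑ j, (IsLinearMap.mk' (μ (bvec m i)) (hμ.2.1 (bvec m i))) (Y j • bvec m j) := by
          rw [map_sum]
      _ = ∑ j, Y j • μ (bvec m i) (bvec m j) := by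
          exact Finset.sum_congr rfl fun j _ => by rw [_root_.map_smul]; rfl
  rw [e1]
  simp only [e2]
  simp only [toBil, cOf, Finset.sum_apply, Pi.smul_apply, smul_eq_mul, Finset.mul_sum, mul_assoc]

theorem mact_mact {m : ℕ} (A B : Matrix (Fin m) (Fin m) ℝ) (μ : Bil m) :
    mact (A * B) μ = mact A (mact B μ) := by
  funext X Y
  simp [mact, Matrix.mul_inv_rev, Matrix.mulVec_mulVec]

theorem isSkew_mact {m : ℕ} (g : Matrix (Fin m) (Fin m) ℝ) {μ : Bil m} (hμ : IsSkewBil μ) :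
    IsSkewBil (mact g μ) := by
  obtain ⟨h1, h2, h3⟩ := hμ
  refine ⟨fun Y => ?_, fun X => ?_, fun X Y => ?_⟩
  · constructor
    · intro x y; simp [mact, Matrix.mulVec_add, (h1 _).map_add]
    · intro s x; simp [mact, Matrix.mulVec_smul, (h1 _).map_smul]
  · constructor
    · intro x y; simp [mact, Matrix.mulVec_add, (h2 _).map_add]
    · intro s x; simp [mact, Matrix.mulVec_smul, (h2 _).map_smul]
  · have : μ (g⁻¹.mulVec X) (g⁻¹.mulVec Y) = -μ (g⁻¹.mulVec Y) (g⁻¹.mulVec X) := h3 _ _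
    simp [mact, this, Matrix.mulVec_neg]

theorem cOf_mact {m : ℕ} (g h : Matrix (Fin m) (Fin m) ℝ) (hg : g⁻¹ = h) (c : Cst m) :
    cOf (mact g (toBil c)) = cact g h c := by
  subst hg
  funext i j k
  have hv : ∀ (A : Matrix (Fin m) (Fin m) ℝ) (i q : Fin m), A.mulVec (bvec m i) q = A q i := by
    intro A i q; simp [bvec, Matrix.mulVec_single]
  simp only [cOf, mact, cact, toBil, hv, Matrix.mulVec, dotProduct, Finset.mul_sum]
  refine Finset.sum_congr rfl fun p _ => Finset.sum_congr rfl fun q _ => Finset.sum_congr rfl fun r _ => by simp [bvec, Pi.single_apply]; ring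


-- ============ matrix exponential facts ============

theorem myexp_continuous {m : ℕ} :
    Continuous (NormedSpace.exp : Matrix (Fin m) (Fin m) ℝ → Matrix (Fin m) (Fin m) ℝ) := by
  letI : NormedRing (Matrix (Fin m) (Fin m) ℝ) := Matrix.linftyOpNormedRing
  letI : NormedAlgebra ℝ (Matrix (Fin m) (Fin m) ℝ) := Matrix.linftyOpNormedAlgebra
  letI : NormedAlgebra ℚ (Matrix (Fin m) (Fin m) ℝ) := Matrix.linftyOpNormedAlgebra
  haveI : CompleteSpace (Matrix (Fin m) (Fin m) ℝ) := FiniteDimensional.complete ℝ _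
  exact NormedSpace.exp_continuous

theorem myexp_deriv {m : ℕ} (D : Matrix (Fin m) (Fin m) ℝ) (t : ℝ) (a b : Fin m) :
    HasDerivAt (fun s : ℝ => NormedSpace.exp (s • D) a b)
      ((D * NormedSpace.exp (t • D)) a b) t := by
  letI : NormedRing (Matrix (Fin m) (Fin m) ℝ) := Matrix.linftyOpNormedRing
  letI : NormedAlgebra ℝ (Matrix (Fin m) (Fin m) ℝ) := Matrix.linftyOpNormedAlgebra
  have h : HasDerivAt (fun s : ℝ => NormedSpace.exp (s • D))
      (D * NormedSpace.exp (t • D)) t := hasDerivAt_exp_smul_const' (𝕂 := ℝ) D t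
  let L0 : Matrix (Fin m) (Fin m) ℝ →ₗ[ℝ] ℝ :=
    (LinearMap.proj (R := ℝ) (φ := fun _ : Fin m => ℝ) b).comp
      (LinearMap.proj (R := ℝ) (φ := fun _ : Fin m => Fin m → ℝ) a)
  have hL : Continuous L0 := LinearMap.continuous_of_finiteDimensional L0
  exact (ContinuousLinearMap.hasFDerivAt ⟨L0, hL⟩).comp_hasDerivAt t h

theorem EE_zero {m : ℕ} (J : Matrix (Fin m) (Fin m) ℝ) (c : Cst m) : EE J c 0 = 1 := by
  rw [EE, zero_smul, NormedSpace.exp_zero]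

theorem EE_entry_deriv {m : ℕ} (J : Matrix (Fin m) (Fin m) ℝ) (c : Cst m) (a b : Fin m) :
    HasDerivAt (fun t => EE J c t a b) (Dmt J c a b) 0 := by
  have h := myexp_deriv (Dmt J c) 0 a b
  simpa [EE, zero_smul, NormedSpace.exp_zero] using h

theorem EEneg_entry_deriv {m : ℕ} (J : Matrix (Fin m) (Fin m) ℝ) (c : Cst m) (a b : Fin m) :
    HasDerivAt (fun t => EE J c (-t) a b) (-(Dmt J c a b)) 0 := by
  have h2 : HasDerivAt (fun s : ℝ => EE J c s a b) (Dmt J c a b) (-0 : ℝ) := by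
    simpa using EE_entry_deriv J c a b
  have h1 : HasDerivAt (fun t : ℝ => -t) (-1 : ℝ) 0 := hasDerivAt_neg 0
  have h := h2.comp 0 h1
  rw [mul_neg_one] at h
  exact h

theorem EE_inv {m : ℕ} (J : Matrix (Fin m) (Fin m) ℝ) (c : Cst m) (t : ℝ) :
    (EE J c t)⁻¹ = EE J c (-t) := by
  rw [EE, EE, neg_smul, Matrix.exp_neg]

theorem isUnit_EE {m : ℕ} (J : Matrix (Fin m) (Fin m) ℝ) (c : Cst m) (t : ℝ) :
    IsUnit (EE J c t) := Matrix.isUnit_exp _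

theorem EE_continuous {m : ℕ} (J : Matrix (Fin m) (Fin m) ℝ) (t : ℝ)
    (hR : Continuous fun c : Cst m => Dmt J c) :
    Continuous fun c : Cst m => EE J c t := by
  exact myexp_continuous.comp ((hR.const_smul t))

theorem cact_one {m : ℕ} (c : Cst m) : cact 1 1 c = c := by
  funext i j k
  simp [cact, Matrix.one_apply]

theorem Phi_zero {m : ℕ} (J : Matrix (Fin m) (Fin m) ℝ) (c : Cst m) :
    Phi J c 0 = normSqC c := by
  rw [Phi, neg_zero, EE_zero, cact_one]

theorem cact_entry_hasDeriv {m : ℕ} (J : Matrix (Fin m) (Fin m) ℝ) (c : Cst m) (i j k : Fin m) :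
    HasDerivAt (fun t => cact (EE J c t) (EE J c (-t)) c i j k)
      (td (Dmt J c) c i j k) 0 := by
  set D := Dmt J c with hD
  have h : ∀ p q r : Fin m,
      HasDerivAt (fun t => EE J c t k p * EE J c (-t) q i * EE J c (-t) r j * c q r p)
        (((D k p * (1 : Matrix (Fin m) (Fin m) ℝ) q i
            + (1 : Matrix (Fin m) (Fin m) ℝ) k p * -(D q i)) * (1 : Matrix (Fin m) (Fin m) ℝ) r j
          + (1 : Matrix (Fin m) (Fin m) ℝ) k p * (1 : Matrix (Fin m) (Fin m) ℝ) q i * -(D r j))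
          * c q r p) 0 := by
    intro p q r
    have e1 := EE_entry_deriv J c k p
    have e2 := EEneg_entry_deriv J c q i
    have e3 := EEneg_entry_deriv J c r j
    have := ((e1.mul e2).mul e3).mul_const (c q r p)
    simpa [EE_zero] using this
  have H : HasDerivAt (fun t => ∑ p, ∑ q, ∑ r,
      EE J c t k p * EE J c (-t) q i * EE J c (-t) r j * c q r p)
      (∑ p, ∑ q, ∑ r,
        (((D k p * (1 : Matrix (Fin m) (Fin m) ℝ) q i
            + (1 : Matrix (Fin m) (Fin m) ℝ) k p * -(D q i)) * (1 : Matrix (Fin m) (Fin m) ℝ) r j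
          + (1 : Matrix (Fin m) (Fin m) ℝ) k p * (1 : Matrix (Fin m) (Fin m) ℝ) q i * -(D r j))
          * c q r p)) 0 := by
    refine HasDerivAt.fun_sum fun p _ => HasDerivAt.fun_sum fun q _ => HasDerivAt.fun_sum fun r _ => h p q r
  have hval : (∑ p, ∑ q, ∑ r,
        (((D k p * (1 : Matrix (Fin m) (Fin m) ℝ) q i
            + (1 : Matrix (Fin m) (Fin m) ℝ) k p * -(D q i)) * (1 : Matrix (Fin m) (Fin m) ℝ) r j
          + (1 : Matrix (Fin m) (Fin m) ℝ) k p * (1 : Matrix (Fin m) (Fin m) ℝ) q i * -(D r j))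
          * c q r p)) = td D c i j k := by
    simp only [Matrix.one_apply, mul_ite, ite_mul, mul_one, one_mul, mul_zero, zero_mul,
      add_mul, sub_mul, neg_mul]
    rw [td]
    simp [Finset.sum_add_distrib, Finset.sum_ite_eq, Finset.sum_ite_eq', sub_eq_add_neg,
      Finset.sum_neg_distrib]
  rw [hval] at H
  exact H

theorem Phi_hasDeriv {m : ℕ} (J : Matrix (Fin m) (Fin m) ℝ) (c : Cst m) :
    HasDerivAt (Phi J c) (∑ i, ∑ j, ∑ k, 2 * c i j k * td (Dmt J c) c i j k) 0 := by
  have h : ∀ i j k : Fin m,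
      HasDerivAt (fun t => (cact (EE J c t) (EE J c (-t)) c i j k) ^ 2)
        (2 * c i j k * td (Dmt J c) c i j k) 0 := by
    intro i j k
    have := (cact_entry_hasDeriv J c i j k).fun_pow 2
    simpa [EE_zero, cact_one, mul_comm, mul_assoc] using this
  have H : HasDerivAt (fun t => ∑ i, ∑ j, ∑ k, (cact (EE J c t) (EE J c (-t)) c i j k) ^ 2)
      (∑ i, ∑ j, ∑ k, 2 * c i j k * td (Dmt J c) c i j k) 0 :=
    HasDerivAt.fun_sum fun i _ => HasDerivAt.fun_sum fun j _ => HasDerivAt.fun_sum fun k _ => h i j k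
  exact H

theorem sc3 {α : Type*} [Fintype α] (f : α → α → α → ℝ) :
    ∑ i, ∑ j, ∑ k, f i j k = ∑ k, ∑ i, ∑ j, f i j k :=
  (Finset.sum_congr rfl fun _ _ => Finset.sum_comm).trans Finset.sum_comm

theorem sc4 {α : Type*} [Fintype α] (f : α → α → α → α → ℝ) :
    ∑ i, ∑ j, ∑ k, ∑ p, f i j k p = ∑ k, ∑ p, ∑ i, ∑ j, f i j k p :=
  (sc3 fun i j k => ∑ p, f i j k p).trans
    (Finset.sum_congr rfl fun k _ => sc3 fun i j p => f i j k p)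

theorem sc4' {α : Type*} [Fintype α] (f : α → α → α → α → ℝ) :
    ∑ i, ∑ j, ∑ k, ∑ q, f i j k q = ∑ q, ∑ i, ∑ j, ∑ k, f i j k q :=
  (Finset.sum_congr rfl fun i _ => sc3 fun j k q => f i j k q).trans Finset.sum_comm

theorem key_alg {m : ℕ} (D : Matrix (Fin m) (Fin m) ℝ) (c : Cst m)
    (hc : ∀ i j k, c j i k = - c i j k) :
    ∑ i, ∑ j, ∑ k, 2 * c i j k * td D c i j k = 8 * Matrix.trace (D * RicC c) := by
  have hsplit : ∑ i, ∑ j, ∑ k, 2 * c i j k * td D c i j k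
      = (∑ i, ∑ j, ∑ k, ∑ p, 2 * c i j k * (D k p * c i j p))
        - (∑ i, ∑ j, ∑ k, ∑ q, 2 * c i j k * (D q i * c q j k))
        - (∑ i, ∑ j, ∑ k, ∑ r, 2 * c i j k * (D r j * c i r k)) := by
    simp only [td, mul_sub, Finset.mul_sum, Finset.sum_sub_distrib]
  have h1 : (∑ i, ∑ j, ∑ k, ∑ p, 2 * c i j k * (D k p * c i j p))
      = ∑ x, ∑ y, D x y * (2 * ∑ i, ∑ j, c i j y * c i j x) := by
    rw [sc4]
    refine Finset.sum_congr rfl fun x _ => Finset.sum_congr rfl fun y _ => ?_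
    simp only [Finset.mul_sum]
    refine Finset.sum_congr rfl fun i _ => Finset.sum_congr rfl fun j _ => by ring
  have h2 : (∑ i, ∑ j, ∑ k, ∑ q, 2 * c i j k * (D q i * c q j k))
      = ∑ x, ∑ y, D x y * (2 * ∑ j, ∑ k, c y j k * c x j k) := by
    rw [sc4']
    refine Finset.sum_congr rfl fun x _ => Finset.sum_congr rfl fun y _ => ?_
    simp only [Finset.mul_sum]
    refine Finset.sum_congr rfl fun j _ => Finset.sum_congr rfl fun k _ => by ring
  have h3 : (∑ i, ∑ j, ∑ k, ∑ r, 2 * c i j k * (D r j * c i r k))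
      = ∑ x, ∑ y, D x y * (2 * ∑ j, ∑ k, c y j k * c x j k) := by
    have hrw : (∑ i, ∑ j, ∑ k, ∑ r, 2 * c i j k * (D r j * c i r k))
        = ∑ i, ∑ j, ∑ k, ∑ r, 2 * c j i k * (D r j * c r i k) := by
      refine Finset.sum_congr rfl fun i _ => Finset.sum_congr rfl fun j _ =>
        Finset.sum_congr rfl fun k _ => Finset.sum_congr rfl fun r _ => ?_
      rw [hc j i k, hc r i k]; ring
    rw [hrw]
    -- current order (i,j,k,r) ; move r to front, then swap i and j blockwise
    have s1 : (∑ i, ∑ j, ∑ k, ∑ r, 2 * c j i k * (D r j * c r i k))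
        = ∑ r, ∑ i, ∑ j, ∑ k, 2 * c j i k * (D r j * c r i k) := sc4' _
    rw [s1]
    refine Finset.sum_congr rfl fun x _ => Finset.sum_comm.trans ?_
    refine Finset.sum_congr rfl fun y _ => ?_
    simp only [Finset.mul_sum]
    refine Finset.sum_congr rfl fun i _ => Finset.sum_congr rfl fun k _ => by ring
  rw [hsplit, h1, h2, h3]
  have htr : Matrix.trace (D * RicC c)
      = ∑ x, ∑ y, D x y *
          (-(1/2) * (∑ a, ∑ b, c y a b * c x a b) + (1/4) * (∑ a, ∑ b, c a b y * c a b x)) := by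
    simp [Matrix.trace, Matrix.mul_apply, RicC, Matrix.diag]
  rw [htr, Finset.mul_sum]
  rw [← Finset.sum_sub_distrib, ← Finset.sum_sub_distrib]
  refine Finset.sum_congr rfl fun x _ => ?_
  rw [Finset.mul_sum, ← Finset.sum_sub_distrib, ← Finset.sum_sub_distrib]
  refine Finset.sum_congr rfl fun y _ => by ring

theorem trace_rac (J R : Matrix (Fin m) (Fin m) ℝ) (hJsq : J * J = -1) :
    Matrix.trace ((1/2 : ℝ) • (R + J * R * J) * ((1/2 : ℝ) • (R + J * R * J)))
      = Matrix.trace ((1/2 : ℝ) • (R + J * R * J) * R) := by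
  have h1 : Matrix.trace (J * R * J * (J * R * J)) = Matrix.trace (R * R) := by
    have e : J * R * J * (J * R * J) = J * R * (J * J) * (R * J) := by noncomm_ring
    rw [e, hJsq]
    have e2 : J * R * (-1 : Matrix (Fin m) (Fin m) ℝ) * (R * J) = -(J * (R * (R * J))) := by
      noncomm_ring
    rw [e2, Matrix.trace_neg, Matrix.trace_mul_comm]
    have e3 : R * (R * J) * J = R * R * (J * J) := by noncomm_ring
    rw [e3, hJsq]
    have e4 : R * R * (-1 : Matrix (Fin m) (Fin m) ℝ) = -(R * R) := by noncomm_ring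
    rw [e4, Matrix.trace_neg, neg_neg]
  have h2 : Matrix.trace (R * (J * R * J)) = Matrix.trace (J * R * J * R) :=
    Matrix.trace_mul_comm _ _
  simp only [smul_mul_assoc, mul_smul_comm, add_mul, mul_add, Matrix.trace_smul,
    Matrix.trace_add, smul_eq_mul]
  rw [h1, h2]
  ring

theorem sympl_one (J : Matrix (Fin m) (Fin m) ℝ) : IsSymplMat J 1 :=
  ⟨isUnit_one, fun X Y => by simp [sympForm, Matrix.one_mulVec]⟩

theorem sympl_mul {J g g' : Matrix (Fin m) (Fin m) ℝ} (hg : IsSymplMat J g)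
    (hg' : IsSymplMat J g') : IsSymplMat J (g * g') := by
  refine ⟨hg.1.mul hg'.1, fun X Y => ?_⟩
  rw [← Matrix.mulVec_mulVec, ← Matrix.mulVec_mulVec, hg.2, hg'.2]

theorem sympl_of_conj {J g : Matrix (Fin m) (Fin m) ℝ} (hu : IsUnit g)
    (hJ : gᵀ * J * g = J) : IsSymplMat J g := by
  refine ⟨hu, fun X Y => ?_⟩
  rw [sympForm, sympForm, Matrix.mulVec_mulVec, ← Matrix.vecMul_transpose,
    Matrix.dotProduct_mulVec, Matrix.vecMul_vecMul, ← mul_assoc, hJ,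
    ← Matrix.dotProduct_mulVec]

theorem exp_sympl {J D : Matrix (Fin m) (Fin m) ℝ} (hJsq : J * J = -1)
    (hDsym : Dᵀ = D) (hDJ : D * J + J * D = 0) (t : ℝ) :
    IsSymplMat J (NormedSpace.exp (t • D)) := by
  have hJu : IsUnit J :=
    ⟨⟨J, -J, by rw [mul_neg, hJsq, neg_neg], by rw [neg_mul, hJsq, neg_neg]⟩, rfl⟩
  have hJdet : IsUnit J.det := (Matrix.isUnit_iff_isUnit_det J).mp hJu
  have hJinv : J⁻¹ = -J := Matrix.inv_eq_right_inv (by rw [mul_neg, hJsq, neg_neg])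
  have hJiu : IsUnit (J⁻¹) := hJinv ▸ hJu.neg
  have hg := Matrix.isUnit_exp (t • D)
  have hedet : IsUnit (NormedSpace.exp (t • D)).det := (Matrix.isUnit_iff_isUnit_det _).mp hg
  refine sympl_of_conj hg ?_
  have htrans : (NormedSpace.exp (t • D))ᵀ = NormedSpace.exp (t • D) := by
    rw [← Matrix.exp_transpose, Matrix.transpose_smul, hDsym]
  have hJDJ : J * D * J = D := by
    have h1 : J * D = -(D * J) := by linear_combination (norm := noncomm_ring) hDJ
    rw [h1]
    have h2 : -(D * J) * J = -(D * (J * J)) := by noncomm_ring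
    rw [h2, hJsq]
    noncomm_ring
  have hconj : J⁻¹ * (t • D) * J = -(t • D) := by
    rw [hJinv, Matrix.neg_mul, mul_smul_comm, Matrix.neg_mul, smul_mul_assoc, hJDJ]
  have e5 : NormedSpace.exp (-(t • D)) = J⁻¹ * NormedSpace.exp (t • D) * J := by
    conv_lhs => rw [← hconj]
    rw [Matrix.exp_conj' _ _ hJu]
  have e6 : NormedSpace.exp (t • D) * J = J * NormedSpace.exp (-(t • D)) := by
    rw [e5, ← mul_assoc, ← mul_assoc, Matrix.mul_nonsing_inv _ hJdet, one_mul]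
  rw [htrans]
  calc NormedSpace.exp (t • D) * J * NormedSpace.exp (t • D)
      = J * NormedSpace.exp (-(t • D)) * NormedSpace.exp (t • D) := by rw [e6]
    _ = J * (NormedSpace.exp (-(t • D)) * NormedSpace.exp (t • D)) := by rw [mul_assoc]
    _ = J := by rw [Matrix.exp_neg, Matrix.nonsing_inv_mul _ hedet, mul_one]

theorem RicC_symm {m : ℕ} (c : Cst m) : (RicC c)ᵀ = RicC c := by
  ext x y
  simp only [RicC, Matrix.transpose_apply, Matrix.of_apply]
  have e1 : (∑ i, ∑ j, c y i j * c x i j) = ∑ i, ∑ j, c x i j * c y i j :=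
    Finset.sum_congr rfl fun i _ => Finset.sum_congr rfl fun j _ => mul_comm _ _
  have e2 : (∑ i, ∑ j, c i j y * c i j x) = ∑ i, ∑ j, c i j x * c i j y :=
    Finset.sum_congr rfl fun i _ => Finset.sum_congr rfl fun j _ => mul_comm _ _
  rw [e1, e2]

theorem Dmt_symm {m : ℕ} {J : Matrix (Fin m) (Fin m) ℝ} (hJskew : Jᵀ = -J) (c : Cst m) :
    (Dmt J c)ᵀ = Dmt J c := by
  have h : (J * RicC c * J)ᵀ = J * RicC c * J := by
    rw [Matrix.transpose_mul, Matrix.transpose_mul, RicC_symm, hJskew]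
    noncomm_ring
  rw [Dmt, RacC, Matrix.transpose_neg, Matrix.transpose_smul, Matrix.transpose_add, h, RicC_symm]

theorem Dmt_J {m : ℕ} {J : Matrix (Fin m) (Fin m) ℝ} (hJsq : J * J = -1) (c : Cst m) :
    Dmt J c * J + J * Dmt J c = 0 := by
  set R := RicC c
  have h : (R + J * R * J) * J + J * (R + J * R * J) = 0 := by
    have e1 : J * R * J * J = J * R * (J * J) := by noncomm_ring
    have e2 : J * (J * R * J) = J * J * (R * J) := by noncomm_ring
    rw [add_mul, mul_add, e1, e2, hJsq]
    noncomm_ring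
  rw [Dmt, RacC]
  simp only [Matrix.neg_mul, Matrix.mul_neg, smul_mul_assoc, mul_smul_comm, ← neg_add,
    ← smul_add, h, smul_zero, neg_zero]
  rw [show (RicC c + J * RicC c * J) * J + J * (RicC c + J * RicC c * J) = 0 from h, smul_zero,
    neg_zero]

theorem deriv_value {m : ℕ} (J : Matrix (Fin m) (Fin m) ℝ) (c : Cst m)
    (hc : ∀ i j k, c j i k = - c i j k) (hJsq : J * J = -1) :
    (∑ i, ∑ j, ∑ k, 2 * c i j k * td (Dmt J c) c i j k)
      = -8 * Matrix.trace (RacC J c * RacC J c) := by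
  rw [key_alg _ _ hc]
  have h : Matrix.trace (Dmt J c * RicC c) = -Matrix.trace (RacC J c * RicC c) := by
    rw [Dmt, Matrix.neg_mul, Matrix.trace_neg]
  rw [h]
  have h2 := trace_rac J (RicC c) hJsq
  rw [show RacC J c * RicC c = (1/2 : ℝ) • (RicC c + J * RicC c * J) * RicC c from rfl, ← h2]
  rw [show ((1/2 : ℝ) • (RicC c + J * RicC c * J) * ((1/2 : ℝ) • (RicC c + J * RicC c * J)))
    = RacC J c * RacC J c from rfl]
  ring

theorem Phi_hasDeriv' {m : ℕ} (J : Matrix (Fin m) (Fin m) ℝ) (c : Cst m)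
    (hc : ∀ i j k, c j i k = - c i j k) (hJsq : J * J = -1) :
    HasDerivAt (Phi J c) (-8 * Matrix.trace (RacC J c * RacC J c)) 0 := by
  have h := Phi_hasDeriv J c
  rwa [deriv_value J c hc hJsq] at h

theorem exists_decrease {f : ℝ → ℝ} {d ε : ℝ} (hf : HasDerivAt f d 0) (hd : d ≤ -8*ε)
    (hε : 0 < ε) : ∃ t, 0 < t ∧ f t < f 0 - 4*ε*t := by
  have hs := hasDerivAt_iff_tendsto_slope.mp hf
  have hlt : d < -4*ε := by linarith
  have hev : ∀ᶠ t in nhdsWithin (0:ℝ) {(0:ℝ)}ᶜ, slope f 0 t < -4*ε :=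
    hs.eventually (Iio_mem_nhds hlt)
  have hmono : nhdsWithin (0:ℝ) (Set.Ioi 0) ≤ nhdsWithin (0:ℝ) {(0:ℝ)}ᶜ :=
    nhdsWithin_mono 0 (fun x hx => ne_of_gt hx)
  have hev' : ∀ᶠ t in nhdsWithin (0:ℝ) (Set.Ioi 0), slope f 0 t < -4*ε := hev.filter_mono hmono
  obtain ⟨t, hts, htpos⟩ := (hev'.and self_mem_nhdsWithin).exists
  refine ⟨t, htpos, ?_⟩
  rw [slope_def_field, sub_zero, div_lt_iff₀ htpos] at hts
  linarith

theorem normSqC_nonneg {m : ℕ} (c : Cst m) : 0 ≤ normSqC c :=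
  Finset.sum_nonneg fun i _ => Finset.sum_nonneg fun j _ => Finset.sum_nonneg fun k _ =>
    sq_nonneg _

theorem sq_le_normSqC {m : ℕ} (c : Cst m) (i j k : Fin m) : (c i j k)^2 ≤ normSqC c := by
  calc (c i j k)^2 ≤ ∑ k', (c i j k')^2 :=
        Finset.single_le_sum (f := fun k' => (c i j k')^2) (fun _ _ => sq_nonneg _)
          (Finset.mem_univ k)
    _ ≤ ∑ j', ∑ k', (c i j' k')^2 :=
        Finset.single_le_sum (f := fun j' => ∑ k', (c i j' k')^2)
          (fun _ _ => Finset.sum_nonneg fun _ _ => sq_nonneg _) (Finset.mem_univ j)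
    _ ≤ normSqC c :=
        Finset.single_le_sum (f := fun i' => ∑ j', ∑ k', (c i' j' k')^2)
          (fun _ _ => Finset.sum_nonneg fun _ _ => Finset.sum_nonneg fun _ _ => sq_nonneg _)
          (Finset.mem_univ i)

theorem cont_entry {m : ℕ} (i j k : Fin m) : Continuous fun c : Cst m => c i j k :=
  (continuous_apply k).comp ((continuous_apply j).comp (continuous_apply i))

theorem cont_RicC {m : ℕ} : Continuous fun c : Cst m => RicC c := by
  refine continuous_matrix fun x y => ?_
  have h1 : Continuous fun c : Cst m => ∑ i, ∑ j, c x i j * c y i j :=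
    continuous_finset_sum _ fun i _ => continuous_finset_sum _ fun j _ =>
      (cont_entry x i j).mul (cont_entry y i j)
  have h2 : Continuous fun c : Cst m => ∑ i, ∑ j, c i j x * c i j y :=
    continuous_finset_sum _ fun i _ => continuous_finset_sum _ fun j _ =>
      (cont_entry i j x).mul (cont_entry i j y)
  exact (continuous_const.mul h1).add (continuous_const.mul h2)

theorem cont_RacC {m : ℕ} (J : Matrix (Fin m) (Fin m) ℝ) :
    Continuous fun c : Cst m => RacC J c :=
  ((cont_RicC.add ((continuous_const.matrix_mul cont_RicC).matrix_mul
    continuous_const))).fun_const_smul _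

theorem cont_Dmt {m : ℕ} (J : Matrix (Fin m) (Fin m) ℝ) :
    Continuous fun c : Cst m => Dmt J c := (cont_RacC J).neg

theorem cont_EE {m : ℕ} (J : Matrix (Fin m) (Fin m) ℝ) (t : ℝ) :
    Continuous fun c : Cst m => EE J c t :=
  myexp_continuous.comp ((cont_Dmt J).const_smul t)

theorem cont_EE_entry {m : ℕ} (J : Matrix (Fin m) (Fin m) ℝ) (t : ℝ) (a b : Fin m) :
    Continuous fun c : Cst m => EE J c t a b :=
  (continuous_apply b).comp ((continuous_apply a).comp (cont_EE J t))

theorem cont_normSqC {m : ℕ} : Continuous (normSqC : Cst m → ℝ) :=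
  continuous_finset_sum _ fun i _ => continuous_finset_sum _ fun j _ =>
    continuous_finset_sum _ fun k _ => (cont_entry i j k).pow 2

theorem cont_Phi {m : ℕ} (J : Matrix (Fin m) (Fin m) ℝ) (t : ℝ) :
    Continuous fun c : Cst m => Phi J c t := by
  show Continuous fun c : Cst m =>
    ∑ i, ∑ j, ∑ k, (cact (EE J c t) (EE J c (-t)) c i j k)^2
  refine continuous_finset_sum _ fun i _ => continuous_finset_sum _ fun j _ =>
    continuous_finset_sum _ fun k _ => Continuous.pow ?_ 2
  show Continuous fun c : Cst m =>
    ∑ p, ∑ q, ∑ r, EE J c t k p * EE J c (-t) q i * EE J c (-t) r j * c q r p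
  refine continuous_finset_sum _ fun p _ => continuous_finset_sum _ fun q _ =>
    continuous_finset_sum _ fun r _ => ?_
  exact (((cont_EE_entry J t k p).mul (cont_EE_entry J (-t) q i)).mul
    (cont_EE_entry J (-t) r j)).mul (cont_entry q r p)

theorem cont_trRac {m : ℕ} (J : Matrix (Fin m) (Fin m) ℝ) :
    Continuous fun c : Cst m => Matrix.trace (RacC J c * RacC J c) := by
  have h := (cont_RacC J).matrix_mul (cont_RacC J)
  show Continuous fun c : Cst m => ∑ i, (RacC J c * RacC J c) i i
  exact continuous_finset_sum _ fun i _ => (continuous_apply i).comp ((continuous_apply i).comp h)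

theorem Phi_orbit {m : ℕ} (J : Matrix (Fin m) (Fin m) ℝ) {μ : Bil m} (hμ : IsSkewBil μ)
    (g : Matrix (Fin m) (Fin m) ℝ) (t : ℝ) :
    Phi J (cOf (mact g μ)) t
      = normSqC (cOf (mact (EE J (cOf (mact g μ)) t * g) μ)) := by
  rw [mact_mact]
  rw [Phi]
  congr 1
  rw [← cOf_mact (EE J (cOf (mact g μ)) t) (EE J (cOf (mact g μ)) (-t))
    (EE_inv J (cOf (mact g μ)) t) (cOf (mact g μ))]
  rw [toBil_cOf (isSkew_mact g hμ)]

theorem main_aux {m : ℕ} (J : Matrix (Fin m) (Fin m) ℝ) (hJskew : Jᵀ = -J) (hJsq : J * J = -1)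
    (μ : Bil m) (hσ : IsSkewBil μ) (ε : ℝ) (hε : 0 < ε) :
    ∃ g, IsSymplMat J g ∧
      Matrix.trace (RacC J (cOf (mact g μ)) * RacC J (cOf (mact g μ))) < ε := by
  by_contra hcon
  push_neg at hcon
  set S : Set ℝ := {r | ∃ g, IsSymplMat J g ∧ normSqC (cOf (mact g μ)) = r} with hS
  have hS0 : S.Nonempty := ⟨_, 1, sympl_one J, rfl⟩
  have hSbd : BddBelow S := by
    refine ⟨0, fun r hr => ?_⟩
    obtain ⟨g, _, hgr⟩ := hr
    exact hgr ▸ normSqC_nonneg _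
  set F := sInf S with hF
  set B := normSqC (cOf (mact 1 μ)) + 1 with hB
  have hFB : F ≤ B - 1 := by
    have h := csInf_le hSbd (⟨1, sympl_one J, rfl⟩ :
      (normSqC (cOf (mact 1 μ))) ∈ S)
    rw [hB]; linarith
  set K : Set (Cst m) := {c | (∀ i j k, c j i k = - c i j k) ∧ normSqC c ≤ B ∧
    ε ≤ Matrix.trace (RacC J c * RacC J c)} with hK
  have hKclosed : IsClosed K := by
    have h1 : IsClosed {c : Cst m | ∀ i j k, c j i k = - c i j k} := by
      have he : {c : Cst m | ∀ i j k, c j i k = - c i j k}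
          = ⋂ i, ⋂ j, ⋂ k, {c : Cst m | c j i k = - c i j k} := by
        ext c; simp [Set.mem_iInter]
      rw [he]
      exact isClosed_iInter fun i => isClosed_iInter fun j => isClosed_iInter fun k =>
        isClosed_eq (cont_entry j i k) (cont_entry i j k).neg
    have h2 : IsClosed {c : Cst m | normSqC c ≤ B} := isClosed_le cont_normSqC continuous_const
    have h3 : IsClosed {c : Cst m | ε ≤ Matrix.trace (RacC J c * RacC J c)} :=
      isClosed_le continuous_const (cont_trRac J)
    have he2 : K = {c : Cst m | ∀ i j k, c j i k = - c i j k} ∩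
        ({c : Cst m | normSqC c ≤ B} ∩ {c : Cst m | ε ≤ Matrix.trace (RacC J c * RacC J c)}) := by
      ext c; simp [hK, Set.mem_inter_iff, and_assoc]
    rw [he2]
    exact h1.inter (h2.inter h3)
  have hbd : K ⊆ Metric.closedBall 0 (Real.sqrt B) := by
    intro c hc
    rw [Metric.mem_closedBall, dist_zero_right]
    rw [pi_norm_le_iff_of_nonneg (Real.sqrt_nonneg B)]
    intro i
    rw [pi_norm_le_iff_of_nonneg (Real.sqrt_nonneg B)]
    intro j
    rw [pi_norm_le_iff_of_nonneg (Real.sqrt_nonneg B)]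
    intro k
    rw [Real.norm_eq_abs, ← Real.sqrt_sq_eq_abs]
    exact Real.sqrt_le_sqrt (le_trans (sq_le_normSqC c i j k) hc.2.1)
  have hKcpt : IsCompact K :=
    IsCompact.of_isClosed_subset (isCompact_closedBall 0 (Real.sqrt B)) hKclosed hbd
  have hprop : ∀ x : K, ∃ t, 0 < t ∧ Phi J (x : Cst m) t < normSqC (x : Cst m) - 4*ε*t := by
    rintro ⟨c, hc⟩
    have hd := Phi_hasDeriv' J c hc.1 hJsq
    have hle : -8 * Matrix.trace (RacC J c * RacC J c) ≤ -8*ε := by nlinarith [hc.2.2]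
    obtain ⟨t, ht, hdec⟩ := exists_decrease hd hle hε
    exact ⟨t, ht, by rwa [Phi_zero] at hdec⟩
  choose T hTpos hTdec using hprop
  set U : K → Set (Cst m) := fun x => {c | Phi J c (T x) < normSqC c - 4*ε*(T x)} with hU
  have hUopen : ∀ x, IsOpen (U x) := fun x =>
    isOpen_lt (cont_Phi J (T x)) (cont_normSqC.sub continuous_const)
  have hcover : K ⊆ ⋃ x, U x := fun c hc => Set.mem_iUnion.mpr ⟨⟨c, hc⟩, hTdec ⟨c, hc⟩⟩
  obtain ⟨s, hs⟩ := hKcpt.elim_finite_subcover U hUopen hcover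
  set δ := if hne : s.Nonempty then min 1 (s.inf' hne fun x => 4*ε*(T x)) else 1 with hδ
  have hδpos : 0 < δ := by
    rw [hδ]; split
    · refine lt_min one_pos ?_
      rw [Finset.lt_inf'_iff]
      intro x _
      have := hTpos x
      positivity
    · exact one_pos
  have hδ1 : δ ≤ 1 := by
    rw [hδ]; split
    · exact min_le_left _ _
    · exact le_refl 1
  obtain ⟨r, hrS, hrF⟩ := exists_lt_of_csInf_lt hS0 (lt_add_of_pos_right F hδpos)
  obtain ⟨g, hgsym, hgr⟩ := hrS
  set ν := cOf (mact g μ) with hν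
  have hνval : normSqC ν < F + δ := by rw [hν, hgr]; exact hrF
  have hνK : ν ∈ K := by
    refine ⟨?_, ?_, ?_⟩
    · intro i j k
      show mact g μ (bvec m j) (bvec m i) k = - mact g μ (bvec m i) (bvec m j) k
      rw [(isSkew_mact g hσ).2.2 (bvec m j) (bvec m i)]
      simp
    · linarith [hνval, hFB, hδ1]
    · exact hcon g hgsym
  have hνmem := hs hνK
  simp only [Set.mem_iUnion] at hνmem
  obtain ⟨x, hxs, hxU⟩ := hνmem
  have hsne : s.Nonempty := ⟨x, hxs⟩
  have hδle : δ ≤ 4*ε*(T x) := by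
    rw [hδ, dif_pos hsne]
    exact le_trans (min_le_right _ _) (Finset.inf'_le _ hxs)
  have hUx : Phi J ν (T x) < normSqC ν - 4*ε*(T x) := hxU
  have hEEsym : IsSymplMat J (EE J ν (T x)) := by
    rw [show EE J ν (T x) = NormedSpace.exp ((T x) • Dmt J ν) from rfl]
    exact exp_sympl hJsq (Dmt_symm hJskew _) (Dmt_J hJsq _) (T x)
  have horb : F ≤ Phi J ν (T x) := by
    rw [hν, Phi_orbit J hσ g (T x)]
    refine csInf_le hSbd ⟨EE J (cOf (mact g μ)) (T x) * g, ?_, rfl⟩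
    exact sympl_mul (hν ▸ hEEsym) hgsym
  linarith [hUx, hνval, hδle, horb]

/-- every symplectic nilpotent Lie group admits compatible metrics whose
anti-complexified Ricci tensor has arbitrarily small norm: for `μ ∈ N_s` and `ε > 0` there is
`g ∈ Sp(n,ℝ)` with `tr((Ric^{ac}_{g.μ})²) < ε`. -/
theorem small_acricci (n : ℕ) (hn : 1 ≤ n)
    (J : Matrix (Fin (2 * n)) (Fin (2 * n)) ℝ) (hJskew : Jᵀ = -J) (hJsq : J * J = -1)
    (μ : Bil (2 * n)) (hμ : NilBracket μ) (hclosed : IsClosedForm (sympForm J) μ)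
    (ε : ℝ) (hε : 0 < ε) :
    ∃ g : Matrix (Fin (2 * n)) (Fin (2 * n)) ℝ, IsSymplMat J g ∧
      Matrix.trace (Ricac J (mact g μ) * Ricac J (mact g μ)) < ε := by
  obtain ⟨g, hsym, htr⟩ := main_aux J hJskew hJsq μ hμ.1 ε hε
  refine ⟨g, hsym, ?_⟩
  rw [Ricac_eq]
  exact htr
end
end
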